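/- arXiv:2601.23195 — 10 statements merged into one kernel-verified Lean document; each statement's English description precedes it below -/
import Mathlib

section
/- Let n ≥ 1, x₀ ∈ ℝⁿ, R > 0, and let u : ℝⁿ → ℝ be such that |u|² is integrable on the ball B_{2R}(x₀). Suppose there exist constants K > 0 and p > 1 such that for all y ∈ B_R(x₀) and all 0 < r < R one has (⨍_{B_r(y)} |u(x) − (u)_{y,r}|² dx)^{1/2} ≤ K · (log(2R/r))^{−p}, where (u)_{y,r} = ⨍_{B_r(y)} u dx denotes the average of u over B_r(y). Then u has a continuous representative ũ on B_R(x₀) (i.e. ũ is continuous on B_R(x₀) and ũ = u Lebesgue-almost everywhere there), and there exists a constant K' > 0, depending only on p and K, such that |ũ(x) − ũ(x')| ≤ K' · (log(2R/|x−x'|))^{1−p} for all distinct x, x' ∈ B_R(x₀). -/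
open MeasureTheory Metric Filter Topology

lemma aux_mvt {p a b : ℝ} (hp : 1 < p) (ha : 0 < a) (hab : a ≤ b) :
    (p - 1) * b ^ (-p) * (b - a) ≤ a ^ (1 - p) - b ^ (1 - p) := by
  rcases eq_or_lt_of_le hab with rfl | hab
  · simp
  have hb : 0 < b := ha.trans hab
  obtain ⟨c, hc, hc2⟩ := exists_hasDerivAt_eq_slope (f := fun t => t ^ (1 - p))
    (f' := fun t => (1 - p) * t ^ (1 - p - 1)) hab
    (ContinuousOn.rpow_const continuousOn_id (fun t ht => Or.inl (ne_of_gt (lt_of_lt_of_le ha ht.1))))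
    (fun t ht => Real.hasDerivAt_rpow_const (Or.inl (ne_of_gt (ha.trans ht.1))))
  have hcpos : 0 < c := ha.trans hc.1
  -- slope = (1-p) * c ^ (-p)
  have h1 : (b ^ (1-p) - a ^ (1-p)) / (b - a) = (1 - p) * c ^ (1 - p - 1) := by
    rw [← hc2]
  have hpow : c ^ (1 - p - 1) ≥ b ^ (1 - p - 1) := by
    apply Real.rpow_le_rpow_of_nonpos hcpos hc.2.le
    linarith
  have h2 : (1 - p) * c ^ (1 - p - 1) ≤ (1 - p) * b ^ (1 - p - 1) := by
    apply mul_le_mul_of_nonpos_left hpow (by linarith)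
  have hba : 0 < b - a := by linarith
  have h3 : b ^ (1 - p) - a ^ (1 - p) ≤ (1 - p) * b ^ (1 - p - 1) * (b - a) := by
    rw [div_eq_iff hba.ne' |>.1 h1]
    exact mul_le_mul_of_nonneg_right h2 hba.le
  have : (1 - p - 1 : ℝ) = -p := by ring
  rw [this] at h3
  nlinarith [h3]

lemma aux_summable {c L p : ℝ} (hc : 0 < c) (hL : 0 < L) (hp : 1 < p) :
    Summable (fun k : ℕ => (c + k * L) ^ (-p)) := by
  set m := min c L with hm
  have hm0 : 0 < m := lt_min hc hL
  have hsum : Summable (fun k : ℕ => (m:ℝ) ^ (-p) * ((k:ℝ) + 1) ^ (-p)) := by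
    apply Summable.mul_left
    have h := Real.summable_nat_rpow (p := -p) |>.2 (by linarith)
    have := (summable_nat_add_iff (f := fun n : ℕ => ((n:ℝ)) ^ (-p)) 1).2 h
    apply this.congr
    intro k; push_cast; ring_nf
  apply Summable.of_nonneg_of_le (fun k => Real.rpow_nonneg (by positivity) _) ?_ hsum
  intro k
  have h1 : m * ((k:ℝ) + 1) ≤ c + k * L := by
    have h2 : m ≤ c := min_le_left _ _
    have h3 : m ≤ L := min_le_right _ _
    have : (0:ℝ) ≤ k := k.cast_nonneg
    nlinarith
  calc (c + k * L) ^ (-p) ≤ (m * ((k:ℝ)+1)) ^ (-p) :=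
        Real.rpow_le_rpow_of_nonpos (by positivity) h1 (by linarith)
    _ = m ^ (-p) * ((k:ℝ)+1) ^ (-p) := Real.mul_rpow hm0.le (by positivity)

lemma aux_tail {c L p : ℝ} (hc : 0 < c) (hL : 0 < L) (hp : 1 < p) (m : ℕ) :
    ∑' k : ℕ, (c + (m + k : ℕ) * L) ^ (-p) ≤ (1/c + 1/((p-1)*L)) * (c + m * L) ^ (1-p) := by
  have hsum : Summable (fun k : ℕ => (c + ((m + k : ℕ) : ℝ) * L) ^ (-p)) :=
    (aux_summable hc hL hp).comp_injective (add_right_injective m)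
  apply Summable.tsum_le_of_sum_le hsum
  intro s
  obtain ⟨N, hN⟩ := s.exists_nat_subset_range
  have hnonneg : ∀ k : ℕ, (0:ℝ) ≤ (c + ((m + k : ℕ) : ℝ) * L) ^ (-p) :=
    fun k => Real.rpow_nonneg (by positivity) _
  have hsub : ∑ k ∈ s, (c + ((m + k : ℕ):ℝ) * L) ^ (-p)
      ≤ ∑ k ∈ Finset.range N, (c + ((m + k : ℕ):ℝ) * L) ^ (-p) :=
    Finset.sum_le_sum_of_subset_of_nonneg hN (fun k _ _ => hnonneg k)
  refine hsub.trans ?_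
  -- split off first term, telescope the rest
  have hrhs0 : (0:ℝ) ≤ (1/c + 1/((p-1)*L)) * (c + m * L) ^ (1-p) := by
    apply mul_nonneg
    · have : 0 < (p-1)*L := by nlinarith
      positivity
    · exact Real.rpow_nonneg (by positivity) _
  rcases Nat.eq_zero_or_pos N with rfl | hN0
  · simpa using hrhs0
  obtain ⟨M, rfl⟩ : ∃ M, N = M + 1 := ⟨N - 1, (Nat.succ_pred_eq_of_pos hN0).symm⟩
  rw [Finset.sum_range_succ']
  simp only [Nat.add_zero]
  -- first term bound: (c+mL)^(-p) ≤ (1/c) * (c+mL)^(1-p)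
  have hbase : ∀ k : ℕ, (0:ℝ) < c + k * L := fun k => by positivity
  have hfirst : (c + (m:ℝ) * L) ^ (-p) ≤ (1/c) * (c + m * L) ^ (1-p) := by
    have : (c + (m:ℝ)*L) ^ (-p) = (c + m*L) ^ (1-p) * (c+m*L)⁻¹ := by
      rw [← Real.rpow_neg_one (c + (m:ℝ)*L), ← Real.rpow_add (hbase m)]
      congr 1; ring
    rw [this]
    rw [mul_comm, one_div]
    apply mul_le_mul_of_nonneg_right _ (Real.rpow_nonneg (hbase m).le _)
    apply inv_anti₀ hc
    have : (0:ℝ) ≤ (m:ℝ)*L := by positivity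
    linarith
  -- telescoping bound for the rest
  set t : ℕ → ℝ := fun k => (c + ((m + k : ℕ):ℝ) * L) ^ (1-p) with ht
  have hP : (0:ℝ) < (p-1)*L := by nlinarith
  have hstep : ∀ k : ℕ, (c + ((m + (k+1) : ℕ):ℝ) * L) ^ (-p) ≤ (t k - t (k+1)) / ((p-1)*L) := by
    intro k
    rw [le_div_iff₀ hP]
    have h := aux_mvt (a := c + ((m + k : ℕ):ℝ) * L) (b := c + ((m + (k+1) : ℕ):ℝ) * L) hp
      (hbase _) (by push_cast; nlinarith)
    have hba : (c + ((m + (k+1) : ℕ):ℝ) * L) - (c + ((m + k : ℕ):ℝ) * L) = L := by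
      push_cast; ring
    rw [hba] at h
    calc (c + ((m + (k+1) : ℕ):ℝ) * L) ^ (-p) * ((p-1)*L)
        = (p-1) * (c + ((m + (k+1) : ℕ):ℝ) * L) ^ (-p) * L := by ring
      _ ≤ t k - t (k+1) := h
  have hsum2 : ∑ k ∈ Finset.range M, (c + ((m + (k+1) : ℕ):ℝ) * L) ^ (-p)
      ≤ (t 0 - t M) / ((p-1)*L) := by
    calc ∑ k ∈ Finset.range M, (c + ((m + (k+1) : ℕ):ℝ) * L) ^ (-p)
        ≤ ∑ k ∈ Finset.range M, (t k - t (k+1)) / ((p-1)*L) :=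
          Finset.sum_le_sum (fun k _ => hstep k)
      _ = (∑ k ∈ Finset.range M, (t k - t (k+1))) / ((p-1)*L) := by
          rw [Finset.sum_div]
      _ = (t 0 - t M) / ((p-1)*L) := by rw [Finset.sum_range_sub']
  have htM : 0 ≤ t M := Real.rpow_nonneg (hbase _).le _
  have ht0 : t 0 = (c + (m:ℝ) * L) ^ (1-p) := by simp [ht]
  have h2 : (t 0 - t M) / ((p-1)*L) ≤ (1/((p-1)*L)) * (c + (m:ℝ)*L) ^ (1-p) := by
    rw [div_le_iff₀ hP]
    have : (1/((p-1)*L)) * (c + (m:ℝ)*L) ^ (1-p) * ((p-1)*L) = t 0 := by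
      rw [ht0]; field_simp [show p - 1 ≠ 0 by linarith]
    rw [this]; linarith
  have hfin := add_le_add (hsum2.trans h2) hfirst
  refine hfin.trans (le_of_eq ?_)
  ring

lemma aux_jensen {α : Type*} [MeasurableSpace α] (μ : Measure α) (s : Set α)
    (hs0 : μ s ≠ 0) (hsT : μ s ≠ ⊤) {g : α → ℝ} (hg : MemLp g 2 (μ.restrict s)) :
    ⨍ x in s, |g x| ∂μ ≤ (⨍ x in s, |g x| ^ 2 ∂μ) ^ ((1:ℝ)/2) := by
  haveI : IsFiniteMeasure (μ.restrict s) :=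
    ⟨by rwa [Measure.restrict_apply_univ, lt_top_iff_ne_top]⟩
  haveI : NeZero (μ.restrict s) :=
    ⟨fun h => hs0 (by rwa [Measure.restrict_eq_zero] at h)⟩
  have hfi : Integrable (fun x => |g x|) (μ.restrict s) := (hg.integrable one_le_two).abs
  have hgn : MemLp (fun x => |g x|) 2 (μ.restrict s) := by
    simpa [Real.norm_eq_abs] using hg.norm
  have hgi : Integrable (fun x => |g x| ^ 2) (μ.restrict s) := hgn.integrable_sq
  have hj := (Even.convexOn_pow (even_two)).map_average_le
    (f := fun x => |g x|) (μ := μ.restrict s)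
    (continuous_pow 2).continuousOn isClosed_univ
    (Filter.Eventually.of_forall (fun x => Set.mem_univ _)) hfi hgi
  have h0 : 0 ≤ ⨍ x in s, |g x| ∂μ := by
    rw [average]
    exact integral_nonneg (fun x => abs_nonneg _)
  have h1 : 0 ≤ ⨍ x in s, |g x| ^ 2 ∂μ := by
    rw [average]
    exact integral_nonneg (fun x => sq_nonneg _)
  rw [← Real.sqrt_eq_rpow]
  exact (Real.le_sqrt h0 h1).2 hj

lemma aux_avg_sub_const {α : Type*} [MeasurableSpace α] (μ : Measure α) (s : Set α)
    (hs0 : μ s ≠ 0) (hsT : μ s ≠ ⊤) {f : α → ℝ} (hf : Integrable f (μ.restrict s)) (c : ℝ) :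
    ⨍ x in s, (f x - c) ∂μ = (⨍ x in s, f x ∂μ) - c := by
  haveI : IsFiniteMeasure (μ.restrict s) :=
    ⟨by rwa [Measure.restrict_apply_univ, lt_top_iff_ne_top]⟩
  have h1 : ⨍ x in s, (f x - c) ∂μ = (⨍ x in s, f x ∂μ) - ⨍ x in s, (fun _ => c) x ∂μ := by
    rw [setAverage_eq, setAverage_eq, setAverage_eq, integral_sub hf (integrable_const c),
      smul_sub]
  rw [h1, setAverage_const hs0 hsT]

lemma aux_cmp {α : Type*} [MeasurableSpace α] (μ : Measure α) {s t : Set α} (hst : s ⊆ t)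
    (hs0 : μ s ≠ 0) (hsT : μ s ≠ ⊤) (htT : μ t ≠ ⊤)
    {f : α → ℝ} (hf : Integrable f (μ.restrict t)) :
    |⨍ x in s, f x ∂μ| ≤ ((μ t).toReal / (μ s).toReal) * ⨍ x in t, |f x| ∂μ := by
  have hms : 0 < (μ s).toReal := ENNReal.toReal_pos hs0 hsT
  have hmt : 0 < (μ t).toReal := ENNReal.toReal_pos (fun h => hs0 (le_antisymm (h ▸ measure_mono hst) zero_le)) htT
  have h1 : |⨍ x in s, f x ∂μ| ≤ (μ s).toReal⁻¹ * ∫ x in s, |f x| ∂μ := by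
    rw [setAverage_eq, smul_eq_mul, measureReal_def, abs_mul, abs_of_nonneg (inv_nonneg.2 hms.le)]
    gcongr
    calc |∫ x in s, f x ∂μ| = ‖∫ x in s, f x ∂μ‖ := (Real.norm_eq_abs _).symm
      _ ≤ ∫ x in s, ‖f x‖ ∂μ := norm_integral_le_integral_norm _
      _ = ∫ x in s, |f x| ∂μ := by simp [Real.norm_eq_abs]
  have h2 : ∫ x in s, |f x| ∂μ ≤ ∫ x in t, |f x| ∂μ := by
    apply setIntegral_mono_set hf.abs
    · exact Filter.Eventually.of_forall (fun x => abs_nonneg _)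
    · exact HasSubset.Subset.eventuallyLE hst
  calc |⨍ x in s, f x ∂μ| ≤ (μ s).toReal⁻¹ * ∫ x in s, |f x| ∂μ := h1
    _ ≤ (μ s).toReal⁻¹ * ∫ x in t, |f x| ∂μ := by gcongr
    _ = ((μ t).toReal / (μ s).toReal) * ⨍ x in t, |f x| ∂μ := by
        rw [setAverage_eq, smul_eq_mul, measureReal_def]
        field_simp


set_option maxHeartbeats 1000000 in
/-- Campanato-type lemma (Frehse): logarithmic decay of mean oscillation implies
existence of a continuous representative with a logarithmic modulus of continuity. -/
theorem campanato_log_decay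
    (n : ℕ) (hn : 1 ≤ n) (x₀ : EuclideanSpace ℝ (Fin n)) (R : ℝ) (hR : 0 < R)
    (u : EuclideanSpace ℝ (Fin n) → ℝ)
    (hu : MemLp u 2 (volume.restrict (ball x₀ (2 * R))))
    (K p : ℝ) (hK : 0 < K) (hp : 1 < p)
    (hdecay : ∀ y ∈ ball x₀ R, ∀ r : ℝ, 0 < r → r < R →
      (⨍ x in ball y r, |u x - (⨍ z in ball y r, u z)| ^ 2) ^ ((1 : ℝ) / 2)
        ≤ K * (Real.log (2 * R / r)) ^ (-p)) :
    ∃ v : EuclideanSpace ℝ (Fin n) → ℝ,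
      ContinuousOn v (ball x₀ R) ∧
      v =ᵐ[volume.restrict (ball x₀ R)] u ∧
      ∃ K' : ℝ, 0 < K' ∧ ∀ x ∈ ball x₀ R, ∀ x' ∈ ball x₀ R, x ≠ x' →
        |v x - v x'| ≤ K' * (Real.log (2 * R / dist x x')) ^ (1 - p) := by
  haveI : Nontrivial (EuclideanSpace ℝ (Fin n)) := by
    apply Module.nontrivial_of_finrank_pos (R := ℝ)
    rw [finrank_euclideanSpace_fin]; omega
  set L : ℝ := Real.log 2 with hLdef
  have hL : 0 < L := Real.log_pos one_lt_two
  set c : ℝ := Real.log 4 with hcdef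
  have hc : 0 < c := Real.log_pos (by norm_num)
  have hcL : c = 2 * L := by
    rw [hcdef, hLdef, show (4:ℝ) = 2^2 by norm_num, Real.log_pow]; push_cast; ring
  -- dyadic radii
  set ρ : ℕ → ℝ := fun k => R / 2 ^ (k+1) with hρdef
  have hρpos : ∀ k, 0 < ρ k := fun k => by positivity
  have hρltR : ∀ k, ρ k < R := by
    intro k
    rw [hρdef]
    calc R / 2 ^ (k+1) ≤ R / 2 ^ 1 := by
          apply div_le_div_of_nonneg_left hR.le (by positivity)
          exact pow_le_pow_right₀ one_le_two (by omega)
      _ < R := by linarith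
  have hρsucc : ∀ k, ρ k = 2 * ρ (k+1) := by
    intro k
    rw [hρdef]
    simp only
    rw [pow_succ]
    field_simp
    ring
  have hρanti : ∀ a b : ℕ, a ≤ b → ρ b ≤ ρ a := by
    intro a b hab
    show R / 2^(b+1) ≤ R / 2^(a+1)
    apply div_le_div_of_nonneg_left hR.le (by positivity)
    exact pow_le_pow_right₀ one_le_two (by omega)
  have hlogρ : ∀ k, Real.log (2 * R / ρ k) = c + k * L := by
    intro k
    have : 2 * R / ρ k = 4 * 2 ^ k := by
      rw [hρdef]; field_simp; ring
    rw [this, Real.log_mul (by norm_num) (by positivity), Real.log_pow, hcdef, hLdef]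
    try ring
  -- basic ball facts
  have hBsub : ∀ y ∈ ball x₀ R, ∀ r : ℝ, r ≤ R → ball y r ⊆ ball x₀ (2 * R) := by
    intro y hy r hr
    apply ball_subset_ball'
    rw [mem_ball] at hy
    linarith
  have hb0 : ∀ (y : EuclideanSpace ℝ (Fin n)) (r : ℝ), 0 < r → volume (ball y r) ≠ 0 :=
    fun y r hr => (measure_ball_pos volume y hr).ne'
  have hbT : ∀ (y : EuclideanSpace ℝ (Fin n)) (r : ℝ), volume (ball y r) ≠ ⊤ :=
    fun y r => measure_ball_lt_top.ne
  -- integrability on subballs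
  have hmem : ∀ (y : EuclideanSpace ℝ (Fin n)) (r : ℝ), ball y r ⊆ ball x₀ (2*R) →
      MemLp u 2 (volume.restrict (ball y r)) := by
    intro y r hsub
    exact hu.mono_measure (Measure.restrict_mono hsub le_rfl)
  have hint : ∀ (y : EuclideanSpace ℝ (Fin n)) (r : ℝ), ball y r ⊆ ball x₀ (2*R) →
      Integrable u (volume.restrict (ball y r)) := by
    intro y r hsub
    haveI : IsFiniteMeasure (volume.restrict (ball y r)) :=
      ⟨by rw [Measure.restrict_apply_univ]; exact measure_ball_lt_top⟩
    exact (hmem y r hsub).integrable one_le_two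
  -- volume of balls
  set C : ℝ := (volume (ball (0 : EuclideanSpace ℝ (Fin n)) 1)).toReal with hCdef
  have hvol : ∀ (y : EuclideanSpace ℝ (Fin n)) (r : ℝ), 0 < r →
      (volume (ball y r)).toReal = r ^ n * C := by
    intro y r hr
    rw [Measure.addHaar_ball_of_pos volume y hr, ENNReal.toReal_mul,
      ENNReal.toReal_ofReal (by positivity), finrank_euclideanSpace_fin]
  have hC : 0 < C := by
    have := hvol 0 1 one_pos
    simp at this
    rw [hCdef]
    exact ENNReal.toReal_pos (hb0 0 1 one_pos) (hbT 0 1)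
  -- L¹ oscillation bound
  have oscL1 : ∀ y ∈ ball x₀ R, ∀ r : ℝ, 0 < r → r < R →
      ⨍ x in ball y r, |u x - (⨍ z in ball y r, u z)| ≤ K * (Real.log (2 * R / r)) ^ (-p) := by
    intro y hy r hr hrR
    have hsub := hBsub y hy r hrR.le
    haveI : IsFiniteMeasure (volume.restrict (ball y r)) :=
      ⟨by rw [Measure.restrict_apply_univ]; exact measure_ball_lt_top⟩
    have hmem' : MemLp (fun x => u x - ⨍ z in ball y r, u z) 2 (volume.restrict (ball y r)) :=
      (hmem y r hsub).sub (memLp_const _)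
    have hj := aux_jensen volume (ball y r) (hb0 y r hr) (hbT y r) hmem'
    exact hj.trans (hdecay y hy r hr hrR)
  -- averages at dyadic scales
  set A : EuclideanSpace ℝ (Fin n) → ℕ → ℝ := fun y k => ⨍ z in ball y (ρ k), u z with hAdef
  -- key comparison: if ball y' r' ⊆ ball y (ρ k) (and y center ok) then
  have cmp : ∀ y ∈ ball x₀ R, ∀ k : ℕ, ∀ (y' : EuclideanSpace ℝ (Fin n)) (r' : ℝ), 0 < r' →
      ball y' r' ⊆ ball y (ρ k) → ρ k ≤ 2 * r' →
      |(⨍ z in ball y' r', u z) - A y k| ≤ 2^n * K * (c + k * L) ^ (-p) := by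
    intro y hy k y' r' hr' hsub hhalf
    have hsubR := hBsub y hy (ρ k) (hρltR k).le
    haveI : IsFiniteMeasure (volume.restrict (ball y (ρ k))) :=
      ⟨by rw [Measure.restrict_apply_univ]; exact measure_ball_lt_top⟩
    have hint' : Integrable (fun x => u x - A y k) (volume.restrict (ball y (ρ k))) :=
      (hint y (ρ k) hsubR).sub (integrable_const _)
    have h1 : (⨍ z in ball y' r', u z) - A y k = ⨍ z in ball y' r', (u z - A y k) :=
      (aux_avg_sub_const volume _ (hb0 y' r' hr') (hbT y' r')
        (hint y' r' (hsub.trans hsubR)) _).symm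
    rw [h1]
    have h2 := aux_cmp volume hsub (hb0 y' r' hr') (hbT y' r') (hbT y (ρ k)) hint'
    have hr2 : (volume (ball y (ρ k))).toReal / (volume (ball y' r')).toReal ≤ 2^n := by
      rw [hvol y (ρ k) (hρpos k), hvol y' r' hr', div_le_iff₀ (by positivity)]
      have hpow : ρ k ^ n ≤ (2*r')^n := pow_le_pow_left₀ (hρpos k).le hhalf n
      calc ρ k ^ n * C ≤ (2*r')^n * C := mul_le_mul_of_nonneg_right hpow hC.le
        _ = 2^n * (r' ^ n * C) := by rw [mul_pow]; ring
    have h3 : ⨍ x in ball y (ρ k), |u x - A y k| ≤ K * (c + k*L)^(-p) := by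
      have h4 := oscL1 y hy (ρ k) (hρpos k) (hρltR k)
      rw [hlogρ k] at h4
      exact h4
    have havgnn : 0 ≤ ⨍ x in ball y (ρ k), |u x - A y k| := by
      rw [average]
      exact integral_nonneg fun x => abs_nonneg _
    calc |⨍ z in ball y' r', (u z - A y k)|
        ≤ ((volume (ball y (ρ k))).toReal / (volume (ball y' r')).toReal)
            * ⨍ x in ball y (ρ k), |u x - A y k| := h2
      _ ≤ 2^n * (K * (c + k*L)^(-p)) :=
          mul_le_mul hr2 h3 havgnn (by positivity)
      _ = 2^n * K * (c + k*L)^(-p) := by ring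
  have step : ∀ y ∈ ball x₀ R, ∀ k : ℕ, |A y (k+1) - A y k| ≤ 2^n * K * (c + k * L) ^ (-p) := by
    intro y hy k
    have hsub : ball y (ρ (k+1)) ⊆ ball y (ρ k) :=
      ball_subset_ball (by rw [hρsucc k]; nlinarith [hρpos (k+1)])
    exact cmp y hy k y (ρ (k+1)) (hρpos (k+1)) hsub (by rw [hρsucc k])
  set d : ℕ → ℝ := fun k => 2^n * K * (c + k * L) ^ (-p) with hddef
  have hdsum : Summable d := (aux_summable hc hL hp).mul_left _
  have hcauchy : ∀ y ∈ ball x₀ R, CauchySeq (A y) := by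
    intro y hy
    apply cauchySeq_of_dist_le_of_summable d _ hdsum
    intro k
    rw [Real.dist_eq, abs_sub_comm]
    exact step y hy k
  set v : EuclideanSpace ℝ (Fin n) → ℝ := fun y => limUnder atTop (A y) with hvdef
  have htends : ∀ y ∈ ball x₀ R, Tendsto (A y) atTop (𝓝 (v y)) :=
    fun y hy => (hcauchy y hy).tendsto_limUnder
  set Ct : ℝ := 2^n * K * (1/c + 1/((p-1)*L)) with hCtdef
  have hCt : 0 < Ct := by
    rw [hCtdef]
    have : 0 < (p-1)*L := by nlinarith
    positivity
  have tail : ∀ y ∈ ball x₀ R, ∀ m : ℕ, |v y - A y m| ≤ Ct * (c + m * L) ^ (1-p) := by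
    intro y hy m
    have h1 : dist (A y m) (v y) ≤ ∑' k, d (m + k) := by
      apply dist_le_tsum_of_dist_le_of_tendsto d _ hdsum (htends y hy) m
      intro k
      rw [Real.dist_eq, abs_sub_comm]
      exact step y hy k
    rw [dist_comm, Real.dist_eq] at h1
    refine h1.trans ?_
    have h2 : ∑' k, d (m + k) = 2^n * K * ∑' k : ℕ, (c + ((m + k : ℕ) : ℝ) * L) ^ (-p) := by
      rw [hddef, ← tsum_mul_left]
      try (congr 1 with k; push_cast; ring)
    rw [h2, hCtdef]
    have h3 := aux_tail hc hL hp m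
    calc 2^n * K * ∑' k : ℕ, (c + ((m + k : ℕ) : ℝ) * L) ^ (-p)
        ≤ 2^n * K * ((1/c + 1/((p-1)*L)) * (c + m * L) ^ (1-p)) := by
          apply mul_le_mul_of_nonneg_left h3 (by positivity)
      _ = 2^n * K * (1/c + 1/((p-1)*L)) * (c + m * L) ^ (1-p) := by ring
  -- uniform bound on A y 0
  set M0 : ℝ := ((volume (ball x₀ (2*R))).toReal / ((ρ 0)^n * C)) * ⨍ x in ball x₀ (2*R), |u x|
    with hM0def
  have havgnn2 : 0 ≤ ⨍ x in ball x₀ (2*R), |u x| := by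
    rw [average]; exact integral_nonneg fun x => abs_nonneg _
  have hM0 : 0 ≤ M0 := by
    apply mul_nonneg _ havgnn2
    have := hρpos 0
    positivity
  have hA0 : ∀ y ∈ ball x₀ R, |A y 0| ≤ M0 := by
    intro y hy
    have hsub : ball y (ρ 0) ⊆ ball x₀ (2*R) := hBsub y hy (ρ 0) (hρltR 0).le
    have h := aux_cmp volume hsub (hb0 y (ρ 0) (hρpos 0)) (hbT y (ρ 0)) (hbT x₀ (2*R))
      (hint x₀ (2*R) (subset_refl _))
    refine h.trans ?_
    rw [hM0def, hvol y (ρ 0) (hρpos 0)]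
  have hvbd : ∀ y ∈ ball x₀ R, |v y| ≤ M0 + Ct * c ^ (1-p) := by
    intro y hy
    have h1 := tail y hy 0
    have h2 := hA0 y hy
    have h3 : (c + (0:ℕ) * L) = c := by simp
    rw [h3] at h1
    have habs : |v y| ≤ |v y - A y 0| + |A y 0| := by
      have h4 := abs_add_le (v y - A y 0) (A y 0)
      have h5 : v y - A y 0 + A y 0 = v y := by ring
      rwa [h5] at h4
    calc |v y| ≤ |v y - A y 0| + |A y 0| := habs
      _ ≤ Ct * c ^ (1-p) + M0 := add_le_add h1 h2
      _ = M0 + Ct * c ^ (1-p) := by ring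
  -- constants
  set C1 : ℝ := (2*Ct + 2^n*K/c) * 2^(p-1) with hC1def
  have hC1 : 0 < C1 := by
    rw [hC1def]
    have h2 : (0:ℝ) < 2^(p-1) := Real.rpow_pos_of_pos two_pos _
    have : (0:ℝ) < 2*Ct + 2^n*K/c := by positivity
    positivity
  set M1 : ℝ := 2*(M0 + Ct * c^(1-p)) with hM1def
  have hM1 : 0 ≤ M1 := by
    have : (0:ℝ) ≤ Ct * c^(1-p) := by positivity
    rw [hM1def]; linarith
  set C2 : ℝ := (M1+1) * (3*L)^(p-1) with hC2def
  have hC2 : 0 < C2 := by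
    rw [hC2def]
    have h2 : (0:ℝ) < (3*L)^(p-1) := Real.rpow_pos_of_pos (by linarith) _
    nlinarith
  set K' : ℝ := C1 + C2 with hK'def
  have hK' : 0 < K' := by rw [hK'def]; linarith
  -- the modulus estimate
  have hmod : ∀ x ∈ ball x₀ R, ∀ x' ∈ ball x₀ R, x ≠ x' →
      |v x - v x'| ≤ K' * (Real.log (2 * R / dist x x')) ^ (1 - p) := by
    intro x hx x' hx' hne
    set d0 : ℝ := dist x x' with hd0def
    have hd0 : 0 < d0 := dist_pos.2 hne
    have hd2R : d0 < 2*R := by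
      rw [hd0def]
      calc dist x x' ≤ dist x x₀ + dist x₀ x' := dist_triangle _ _ _
        _ < R + R := add_lt_add (mem_ball.1 hx) (by rw [dist_comm]; exact mem_ball.1 hx')
        _ = 2*R := by ring
    set T : ℝ := Real.log (2*R/d0) with hTdef
    have hT : 0 < T := Real.log_pos ((one_lt_div hd0).2 hd2R)
    have hTpow : 0 < T^(1-p) := Real.rpow_pos_of_pos hT _
    rcases le_or_gt d0 (ρ 1) with hcase | hcase
    · -- small distance case
      have hex : ∃ k, ρ k < d0 := by
        obtain ⟨k, hk⟩ := pow_unbounded_of_one_lt (R/d0) (one_lt_two (α := ℝ))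
        refine ⟨k, ?_⟩
        have hρk : ρ k = R / 2^(k+1) := rfl
        rw [hρk, div_lt_iff₀ (by positivity : (0:ℝ) < 2^(k+1))]
        rw [div_lt_iff₀ hd0] at hk
        have hpow : (2:ℝ)^k ≤ 2^(k+1) := pow_le_pow_right₀ one_le_two (by omega)
        nlinarith
      obtain ⟨j, hdlej1, hj2lt⟩ : ∃ j, d0 ≤ ρ (j+1) ∧ ρ (j+2) < d0 := by
        have hNmin : ∀ m, m < Nat.find hex → d0 ≤ ρ m :=
          fun m hm => le_of_not_gt (Nat.find_min hex hm)
        have hN2 : 2 ≤ Nat.find hex := by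
          rcases Nat.lt_or_ge 2 (Nat.find hex) with h | h
          · omega
          · rcases Nat.lt_or_ge (Nat.find hex) 2 with h2 | h2
            · exfalso
              have hsp := Nat.find_spec hex
              have hmono := hρanti (Nat.find hex) 1 (by omega)
              linarith
            · omega
        refine ⟨Nat.find hex - 2, hNmin _ (by omega), ?_⟩
        have heq2 : Nat.find hex - 2 + 2 = Nat.find hex := by omega
        rw [heq2]
        exact Nat.find_spec hex
      set t : ℝ := c + j*L with htdef
      have ht0 : 0 < t := by rw [htdef]; positivity
      have hct : c ≤ t := by
        rw [htdef]
        have : (0:ℝ) ≤ j*L := by positivity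
        linarith
      -- T < 2t
      have hT2t : T < 2*t := by
        have h1 : T < Real.log (2*R/ρ (j+2)) := by
          rw [hTdef]
          apply Real.log_lt_log (by positivity)
          apply div_lt_div_of_pos_left (by linarith) (hρpos _) hj2lt
        rw [hlogρ (j+2)] at h1
        have : c + (j+2:ℕ)*L = t + c := by rw [htdef, hcL]; push_cast; ring
        rw [this] at h1
        linarith
      -- three term bounds
      have b1 : |v x - A x (j+1)| ≤ Ct * (c + (j+1)*L)^(1-p) := by
        have := tail x hx (j+1); rwa [Nat.cast_add, Nat.cast_one] at this
      have b2 : |v x' - A x' j| ≤ Ct * t^(1-p) := tail x' hx' j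
      have b3 : |A x (j+1) - A x' j| ≤ 2^n * K * t^(-p) := by
        have hsub : ball x (ρ (j+1)) ⊆ ball x' (ρ j) := by
          apply ball_subset_ball'
          rw [← hd0def, hρsucc j]
          linarith [hdlej1]
        exact cmp x' hx' j x (ρ (j+1)) (hρpos _) hsub (le_of_eq (hρsucc j))
      -- combine
      have e1 : (c + (j+1:ℝ)*L)^(1-p) ≤ t^(1-p) := by
        apply Real.rpow_le_rpow_of_nonpos ht0 (by rw [htdef]; nlinarith) (by linarith)
      have e2 : t^(1-p) ≤ (T/2)^(1-p) := by
        apply Real.rpow_le_rpow_of_nonpos (by linarith) (by linarith) (by linarith)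
      have e3 : t^(-p) ≤ (1/c) * t^(1-p) := by
        have heq : t^(-p) = t^(1-p) * t⁻¹ := by
          rw [← Real.rpow_neg_one t, ← Real.rpow_add ht0]; congr 1; ring
        rw [heq, mul_comm, one_div]
        apply mul_le_mul_of_nonneg_right _ (Real.rpow_nonneg ht0.le _)
        exact inv_anti₀ hc hct
      have e4 : (T/2)^(1-p) = 2^(p-1) * T^(1-p) := by
        rw [Real.div_rpow hT.le two_pos.le, div_eq_mul_inv, mul_comm]
        congr 1
        rw [← Real.rpow_neg two_pos.le]
        congr 1
        ring
      calc |v x - v x'|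
          ≤ |v x - A x (j+1)| + |A x (j+1) - A x' j| + |A x' j - v x'| := by
            have h := abs_sub_le (v x) (A x (j+1)) (v x')
            have h2 := abs_sub_le (A x (j+1)) (A x' j) (v x')
            linarith
        _ ≤ Ct * (c + (j+1)*L)^(1-p) + 2^n * K * t^(-p) + Ct * t^(1-p) := by
            rw [abs_sub_comm (A x' j) (v x')] at *
            push_cast at b1 ⊢
            exact add_le_add (add_le_add b1 b3) b2
        _ ≤ Ct * t^(1-p) + (2^n * K / c) * t^(1-p) + Ct * t^(1-p) := by
            apply add_le_add (add_le_add _ _) le_rfl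
            · apply mul_le_mul_of_nonneg_left _ hCt.le
              push_cast
              exact e1
            · calc 2^n * K * t^(-p) ≤ 2^n * K * ((1/c) * t^(1-p)) := by
                    apply mul_le_mul_of_nonneg_left e3 (by positivity)
                _ = (2^n * K / c) * t^(1-p) := by ring
        _ = (2*Ct + 2^n*K/c) * t^(1-p) := by ring
        _ ≤ (2*Ct + 2^n*K/c) * (T/2)^(1-p) := by
            apply mul_le_mul_of_nonneg_left e2 (by positivity)
        _ = C1 * T^(1-p) := by rw [hC1def, e4]; ring
        _ ≤ K' * T^(1-p) := by
            apply mul_le_mul_of_nonneg_right _ hTpow.le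
            rw [hK'def]; linarith
    · -- large distance case
      have hT3L : T ≤ 3*L := by
        have h1 : T < Real.log (2*R/ρ 1) := by
          rw [hTdef]
          apply Real.log_lt_log (by positivity)
          apply div_lt_div_of_pos_left (by linarith) (hρpos _) hcase
        rw [hlogρ 1] at h1
        rw [hcL] at h1
        push_cast at h1
        linarith
      have hTT : (3*L)^(1-p) ≤ T^(1-p) :=
        Real.rpow_le_rpow_of_nonpos hT hT3L (by linarith)
      have hbd : |v x - v x'| ≤ M1 := by
        have h1 := hvbd x hx
        have h2 := hvbd x' hx'
        rw [hM1def]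
        calc |v x - v x'| ≤ |v x| + |v x'| := abs_sub _ _
          _ ≤ _ := by linarith
      have hone : (3*L)^(p-1) * (3*L)^(1-p) = 1 := by
        rw [← Real.rpow_add (by linarith)]
        norm_num
      calc |v x - v x'| ≤ M1 := hbd
        _ = (M1 + 1) * ((3*L)^(p-1) * (3*L)^(1-p)) - (3*L)^(p-1) * (3*L)^(1-p) := by
            rw [hone]; ring
        _ ≤ C2 * T^(1-p) := by
            rw [hC2def]
            have h5 : (0:ℝ) < (3*L)^(p-1) := Real.rpow_pos_of_pos (by linarith) _
            have h6 : (M1+1) * ((3*L)^(p-1) * (3*L)^(1-p)) ≤ (M1+1) * ((3*L)^(p-1) * T^(1-p)) := by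
              apply mul_le_mul_of_nonneg_left _ (by linarith)
              exact mul_le_mul_of_nonneg_left hTT h5.le
            have h7 : (0:ℝ) < (3*L)^(p-1) * (3*L)^(1-p) := by rw [hone]; norm_num
            calc (M1 + 1) * ((3*L)^(p-1) * (3*L)^(1-p)) - (3*L)^(p-1) * (3*L)^(1-p)
                ≤ (M1 + 1) * ((3*L)^(p-1) * (3*L)^(1-p)) := by linarith
              _ ≤ (M1+1) * ((3*L)^(p-1) * T^(1-p)) := h6
              _ = (M1+1) * (3*L)^(p-1) * T^(1-p) := by ring
        _ ≤ K' * T^(1-p) := by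
            apply mul_le_mul_of_nonneg_right _ hTpow.le
            rw [hK'def]; linarith
  -- continuity
  have hcont : ContinuousOn v (ball x₀ R) := by
    intro x hx
    rw [Metric.continuousWithinAt_iff]
    intro ε hε
    have h1 : Tendsto (fun s : ℝ => Real.log (2*R/s)) (𝓝[>] (0:ℝ)) atTop := by
      have h3 : Tendsto (fun s : ℝ => - Real.log s) (𝓝[>] (0:ℝ)) atTop :=
        tendsto_neg_atBot_atTop.comp Real.tendsto_log_nhdsGT_zero
      have h2 := tendsto_atTop_add_const_left _ (Real.log (2*R)) h3
      apply h2.congr'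
      filter_upwards [self_mem_nhdsWithin] with s hs
      rw [Real.log_div (by positivity) (ne_of_gt hs)]
      ring
    have h4 : Tendsto (fun t : ℝ => t^(1-p)) atTop (𝓝 (0:ℝ)) := by
      have h5 := tendsto_rpow_neg_atTop (y := p-1) (by linarith)
      apply h5.congr
      intro t
      congr 1
      ring
    have h6 : Tendsto (fun s : ℝ => K' * Real.log (2*R/s)^(1-p)) (𝓝[>] (0:ℝ)) (𝓝 0) := by
      have h7 := (h4.comp h1).const_mul K'
      simpa using h7
    have h7 := h6.eventually_lt_const hε
    obtain ⟨δ, hδ, hsubδ⟩ := Metric.mem_nhdsWithin_iff.1 h7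
    refine ⟨δ, hδ, fun y hy hdist => ?_⟩
    rcases eq_or_ne y x with rfl | hne
    · simpa using hε
    · have hmem' : dist y x ∈ Metric.ball (0:ℝ) δ ∩ Set.Ioi 0 :=
        ⟨by simpa [Real.dist_eq, abs_of_nonneg dist_nonneg] using hdist, dist_pos.2 hne⟩
      have h8 := hsubδ hmem'
      calc dist (v y) (v x) = |v y - v x| := Real.dist_eq _ _
        _ ≤ K' * (Real.log (2*R / dist y x))^(1-p) := hmod y hy x hx hne
        _ < ε := h8
  -- a.e. identification via Lebesgue differentiation
  have hfind : Integrable ((ball x₀ (2*R)).indicator u) volume := by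
    rw [integrable_indicator_iff measurableSet_ball]
    exact hint x₀ (2*R) (subset_refl _)
  have hloc : LocallyIntegrable ((ball x₀ (2*R)).indicator u) volume :=
    hfind.locallyIntegrable
  have hdiff := IsUnifLocDoublingMeasure.ae_tendsto_average (μ := volume) hloc (1:ℝ)
  have hglobal : ∀ᵐ y ∂(volume : Measure (EuclideanSpace ℝ (Fin n))),
      y ∈ ball x₀ R → v y = u y := by
    filter_upwards [hdiff] with y hy hymem
    have hδ : Tendsto ρ atTop (𝓝[>] (0:ℝ)) := by
      rw [tendsto_nhdsWithin_iff]
      constructor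
      · have h2 : Tendsto (fun k : ℕ => (2:ℝ)^(k+1)) atTop atTop :=
          (tendsto_pow_atTop_atTop_of_one_lt one_lt_two).comp (tendsto_add_atTop_nat 1)
        exact tendsto_const_nhds.div_atTop h2
      · exact Eventually.of_forall (fun k => hρpos k)
    have hev : ∀ᶠ j in (atTop : Filter ℕ), y ∈ closedBall y (1 * ρ j) :=
      Eventually.of_forall (fun j => mem_closedBall_self (by linarith [hρpos j]))
    have htt := hy (fun _ => y) ρ hδ hev
    have heq : ∀ j : ℕ, ⨍ z in closedBall y (ρ j), ((ball x₀ (2*R)).indicator u) z = A y j := by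
      intro j
      have hae2 : (closedBall y (ρ j) : Set (EuclideanSpace ℝ (Fin n))) =ᵐ[volume]
          (ball y (ρ j) : Set (EuclideanSpace ℝ (Fin n))) := by
        rw [ae_eq_set]
        constructor
        · apply measure_mono_null (t := sphere y (ρ j)) ?_ (Measure.addHaar_sphere volume y (ρ j))
          intro z hz
          have h1 : dist z y ≤ ρ j := hz.1
          have h2 : ¬ dist z y < ρ j := hz.2
          simp only [mem_sphere]
          linarith [lt_or_eq_of_le h1 |>.resolve_left h2]
        · rw [Set.diff_eq_empty.2 ball_subset_closedBall]
          exact measure_empty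
      rw [setAverage_congr hae2]
      apply setAverage_congr_fun measurableSet_ball
      apply ae_of_all
      intro z hz
      exact Set.indicator_of_mem (hBsub y hymem (ρ j) (hρltR j).le hz) u
    have htt' : Tendsto (A y) atTop (𝓝 (((ball x₀ (2*R)).indicator u) y)) := by
      apply htt.congr
      intro j
      exact heq j
    have hvy := tendsto_nhds_unique (htends y hymem) htt'
    rw [hvy]
    exact Set.indicator_of_mem (ball_subset_ball (by linarith) hymem) u
  have haeq : v =ᵐ[volume.restrict (ball x₀ R)] u := by
    have h1 : ∀ᵐ y ∂(volume.restrict (ball x₀ R)), y ∈ ball x₀ R → v y = u y :=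
      ae_restrict_of_ae hglobal
    filter_upwards [h1, ae_restrict_mem measurableSet_ball] with y h2 h3
    exact h2 h3
  exact ⟨v, hcont, haeq, K', hK', hmod⟩
end

section
/- Let E be a finite-dimensional real normed vector space, let 1 ≤ q < ∞ be a real number, and let F : E → ℝ be a continuous convex function for which there exists a constant c > 0 with 0 ≤ F(z) ≤ c(1 + ‖z‖^q) for all z ∈ E. Then there exists a constant L > 0 such that |F(z) − F(z')| ≤ L(1 + ‖z‖ + ‖z'‖)^{q−1}‖z − z'‖ for all z, z' ∈ E. -/
/-- Lipschitz-type estimate for continuous convex functions with `q`-growth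
(Lemma 5.2 in Giusti; Lemma 2.8 of the paper). -/
theorem convex_qGrowth_lipschitz_type
    (E : Type*) [NormedAddCommGroup E] [NormedSpace ℝ E] [FiniteDimensional ℝ E]
    (q : ℝ) (hq : 1 ≤ q) (F : E → ℝ)
    (hFcont : Continuous F) (hFconv : ConvexOn ℝ Set.univ F)
    (c : ℝ) (hc : 0 < c)
    (hF0 : ∀ z : E, 0 ≤ F z) (hFgrowth : ∀ z : E, F z ≤ c * (1 + ‖z‖ ^ q)) :
    ∃ L : ℝ, 0 < L ∧ ∀ z z' : E,
      |F z - F z'| ≤ L * (1 + ‖z‖ + ‖z'‖) ^ (q - 1) * ‖z - z'‖ := by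
  set L := c * (1 + (2 : ℝ) ^ q) with hLdef
  have h2q : (0 : ℝ) < (2 : ℝ) ^ q := Real.rpow_pos_of_pos two_pos q
  have hLpos : 0 < L := by positivity
  refine ⟨L, hLpos, ?_⟩
  have key : ∀ z z' : E, F z - F z' ≤ L * (1 + ‖z‖ + ‖z'‖) ^ (q - 1) * ‖z - z'‖ := by
    intro z z'
    rcases eq_or_ne z z' with rfl | hne
    · simp
    · set d := ‖z - z'‖ with hd
      have hdpos : 0 < d := by
        rw [hd]; exact norm_pos_iff.mpr (sub_ne_zero.mpr hne)
      set R := 1 + ‖z‖ + ‖z'‖ with hR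
      have hR1 : 1 ≤ R := by
        have := norm_nonneg z; have := norm_nonneg z'; rw [hR]; linarith
      have hRpos : 0 < R := lt_of_lt_of_le one_pos hR1
      set w := z + (R / d) • (z - z') with hw
      set t : ℝ := d / (d + R) with htdef
      have ht0 : 0 ≤ t := by positivity
      have ht1 : t ≤ 1 := by
        rw [htdef, div_le_one (by linarith)]; linarith
      have hzcomb : z = t • w + (1 - t) • z' := by
        rw [hw, htdef]
        match_scalars <;> field_simp <;> ring
      have hconv := hFconv.2 (Set.mem_univ w) (Set.mem_univ z') ht0
        (by linarith : (0:ℝ) ≤ 1 - t) (by ring : t + (1 - t) = 1)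
      have hFz : F z ≤ t * F w + (1 - t) * F z' := by
        calc F z = F (t • w + (1 - t) • z') := by rw [← hzcomb]
        _ ≤ t * F w + (1 - t) * F z' := hconv
      have hstep1 : F z - F z' ≤ t * F w := by
        have := hF0 z'
        nlinarith
      have htle : t ≤ d / R := by
        rw [htdef]
        gcongr
        linarith
      -- bound F w
      have hwnorm : ‖w‖ ≤ 2 * R := by
        have : ‖w‖ ≤ ‖z‖ + ‖(R / d) • (z - z')‖ := norm_add_le _ _
        rw [norm_smul, ← hd, Real.norm_eq_abs, abs_of_pos (by positivity)] at this
        have hRd : R / d * d = R := by field_simp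
        rw [hRd] at this
        have : ‖z‖ ≤ R := by rw [hR]; have := norm_nonneg z'; linarith
        linarith
      have hwq : ‖w‖ ^ q ≤ (2:ℝ) ^ q * R ^ q := by
        calc ‖w‖ ^ q ≤ (2 * R) ^ q :=
              Real.rpow_le_rpow (norm_nonneg w) hwnorm (by linarith)
        _ = (2:ℝ) ^ q * R ^ q := Real.mul_rpow (by norm_num) (le_of_lt hRpos)
      have hRq1 : 1 ≤ R ^ q := Real.one_le_rpow hR1 (by linarith)
      have hFw : F w ≤ L * R ^ q := by
        calc F w ≤ c * (1 + ‖w‖ ^ q) := hFgrowth w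
        _ ≤ c * (R ^ q + (2:ℝ) ^ q * R ^ q) := by nlinarith
        _ = L * R ^ q := by rw [hLdef]; ring
      have hfinal : F z - F z' ≤ (d / R) * (L * R ^ q) := by
        have hFw0 : 0 ≤ F w := hF0 w
        calc F z - F z' ≤ t * F w := hstep1
        _ ≤ (d / R) * F w := by nlinarith
        _ ≤ (d / R) * (L * R ^ q) := by
            have : 0 ≤ d / R := by positivity
            nlinarith
      have hRq : R ^ (q - 1) = R ^ q / R := by
        rw [Real.rpow_sub hRpos, Real.rpow_one]
      calc F z - F z' ≤ (d / R) * (L * R ^ q) := hfinal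
      _ = L * R ^ (q - 1) * d := by rw [hRq]; field_simp
  intro z z'
  rw [abs_sub_le_iff]
  constructor
  · exact key z z'
  · have h := key z' z
    have h1 : 1 + ‖z'‖ + ‖z‖ = 1 + ‖z‖ + ‖z'‖ := by ring
    rw [h1, norm_sub_rev] at h
    exact h
end

section
/- Let a < b be real numbers, let I = [a, b], let 1 ≤ p < ∞ be a real number, and let u : ℝ → ℝ be continuously differentiable on I. Denote by (u)_I = (b−a)⁻¹ ∫_a^b u(x) dx the mean value of u over I. Then for every x ∈ I one has |u(x) − (u)_I| ≤ ((p+2)/2)^{2/(p+2)} · (∫_a^b |u(s) − (u)_I|^p ds)^{1/(p+2)} · (∫_a^b u'(s)² ds)^{1/(p+2)}; equivalently, ‖u − (u)_I‖_{L^∞(I)} ≤ ((p+2)/2)^{2/(p+2)} ‖u − (u)_I‖_{L^p(I)}^{p/(p+2)} ‖u'‖_{L²(I)}^{2/(p+2)}. -/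
open Real Set Filter Topology

lemma hasDerivAt_abs_rpow_mul {r : ℝ} (hr : 0 < r) (y : ℝ) :
    HasDerivAt (fun z : ℝ => |z| ^ r * z) ((r + 1) * |y| ^ r) y := by
  rcases lt_trichotomy y 0 with hy | hy | hy
  · have h2 : HasDerivAt (fun z : ℝ => -((-z) ^ (r + 1))) ((r + 1) * |y| ^ r) y := by
      have hneg : HasDerivAt (fun z : ℝ => -z) (-1) y := (hasDerivAt_neg y)
      have h3 : HasDerivAt (fun z : ℝ => z ^ (r + 1)) ((r + 1) * (-y) ^ r) (-y) := by
        have := Real.hasDerivAt_rpow_const (x := -y) (p := r + 1) (Or.inl (by linarith))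
        simpa using this
      have : HasDerivAt (fun z : ℝ => -((-z) ^ (r + 1))) (-((r + 1) * (-y) ^ r * -1)) y :=
        (h3.comp y hneg).neg
      rw [abs_of_neg hy]
      convert this using 1
      ring
    refine h2.congr_of_eventuallyEq ?_
    filter_upwards [eventually_lt_nhds hy] with z hz
    have hz' : (-z : ℝ) ≠ 0 := neg_ne_zero.mpr hz.ne
    rw [abs_of_neg hz, Real.rpow_add_one hz' r]
    ring
  · subst hy
    have h0 : ((r + 1) * |(0:ℝ)| ^ r) = 0 := by
      simp [Real.zero_rpow hr.ne']
    rw [h0, hasDerivAt_iff_tendsto_slope]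
    have : (slope (fun z : ℝ => |z| ^ r * z) 0) =ᶠ[𝓝[≠] (0:ℝ)] fun z => |z| ^ r := by
      filter_upwards [self_mem_nhdsWithin] with z hz
      have hz : (z : ℝ) ≠ 0 := hz
      simp only [slope, vsub_eq_sub, smul_eq_mul, sub_zero, mul_zero]
      field_simp
    rw [tendsto_congr' this]
    have hc : ContinuousAt (fun z : ℝ => |z| ^ r) 0 := by
      exact (Real.continuousAt_rpow_const _ _ (Or.inr hr.le)).comp continuous_abs.continuousAt
    have ht := hc.tendsto
    simpa [Real.zero_rpow hr.ne'] using ht.mono_left nhdsWithin_le_nhds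
  · have h3 : HasDerivAt (fun z : ℝ => z ^ (r + 1)) ((r + 1) * |y| ^ r) y := by
      have := Real.hasDerivAt_rpow_const (x := y) (p := r + 1) (Or.inl hy.ne')
      simpa [abs_of_pos hy] using this
    refine h3.congr_of_eventuallyEq ?_
    filter_upwards [eventually_gt_nhds hy] with z hz
    rw [abs_of_pos hz, Real.rpow_add_one hz.ne' r]

open MeasureTheory intervalIntegral

/-- One-dimensional interpolation inequality (Lemma 3.2, estimate (3.10) of the paper),
for continuously differentiable functions. -/
theorem oneD_interpolation
    (a b : ℝ) (hab : a < b) (p : ℝ) (hp : 1 ≤ p)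
    (u u' : ℝ → ℝ)
    (hderiv : ∀ x ∈ Set.Icc a b, HasDerivWithinAt u (u' x) (Set.Icc a b) x)
    (hcont : ContinuousOn u' (Set.Icc a b)) :
    ∀ x ∈ Set.Icc a b,
      |u x - (b - a)⁻¹ * ∫ s in a..b, u s| ≤
        ((p + 2) / 2) ^ (2 / (p + 2)) *
          (∫ s in a..b, |u s - (b - a)⁻¹ * ∫ t in a..b, u t| ^ p) ^ (1 / (p + 2)) *
          (∫ s in a..b, (u' s) ^ 2) ^ (1 / (p + 2)) := by
  intro x hx
  set c : ℝ := (b - a)⁻¹ * ∫ s in a..b, u s with hc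
  set v : ℝ → ℝ := fun s => u s - c with hv
  have hba : (0:ℝ) < b - a := by linarith
  have hvderiv : ∀ s ∈ Set.Icc a b, HasDerivWithinAt v (u' s) (Set.Icc a b) s :=
    fun s hs => (hderiv s hs).sub_const c
  have hucont : ContinuousOn u (Set.Icc a b) := fun s hs => (hderiv s hs).continuousWithinAt
  have hvcont : ContinuousOn v (Set.Icc a b) := hucont.sub continuousOn_const
  have huint : IntervalIntegrable u volume a b :=
    (hucont.mono (by rw [Set.uIcc_of_le hab.le])).intervalIntegrable
  have hintv : ∫ s in a..b, v s = 0 := by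
    rw [hv]
    simp only
    rw [intervalIntegral.integral_sub huint intervalIntegrable_const,
      intervalIntegral.integral_const, smul_eq_mul, hc]
    field_simp
    ring
  -- v has a zero
  obtain ⟨y0, hy0I, hy0⟩ : ∃ y0 ∈ Set.Icc a b, v y0 = 0 := by
    by_contra h
    push_neg at h
    have hvint : IntervalIntegrable v volume a b :=
      (hvcont.mono (by rw [Set.uIcc_of_le hab.le])).intervalIntegrable
    by_cases hpos : ∀ s ∈ Set.Icc a b, 0 < v s
    · have := intervalIntegral_pos_of_pos_on hvint
        (fun s hs => hpos s ⟨hs.1.le, hs.2.le⟩) hab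
      rw [hintv] at this; exact lt_irrefl 0 this
    · push_neg at hpos
      obtain ⟨s₁, hs₁I, hs₁⟩ := hpos
      have hs₁' : v s₁ < 0 := lt_of_le_of_ne hs₁ (h s₁ hs₁I)
      by_cases hneg : ∀ s ∈ Set.Icc a b, v s < 0
      · have := intervalIntegral_pos_of_pos_on (f := fun s => -v s) hvint.neg
          (fun s hs => neg_pos.mpr (hneg s ⟨hs.1.le, hs.2.le⟩)) hab
        rw [intervalIntegral.integral_neg, hintv, neg_zero] at this
        exact lt_irrefl 0 this
      · push_neg at hneg
        obtain ⟨s₂, hs₂I, hs₂⟩ := hneg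
        have hs₂' : 0 < v s₂ := lt_of_le_of_ne hs₂ (Ne.symm (h s₂ hs₂I))
        have hsub : Set.uIcc s₁ s₂ ⊆ Set.Icc a b := Set.uIcc_subset_Icc hs₁I hs₂I
        have : (0:ℝ) ∈ Set.uIcc (v s₁) (v s₂) :=
          Set.mem_uIcc.mpr (Or.inl ⟨hs₁'.le, hs₂'.le⟩)
        obtain ⟨y, hyI, hyv⟩ := intermediate_value_uIcc (hvcont.mono hsub) this
        exact h y (hsub hyI) hyv
  set r : ℝ := p / 2 with hrdef
  have hr : 0 < r := by rw [hrdef]; linarith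
  set g : ℝ → ℝ := fun s => (r + 1) * |v s| ^ r * u' s with hgdef
  have hwderiv : ∀ s ∈ Set.Icc a b,
      HasDerivWithinAt (fun s => |v s| ^ r * v s) (g s) (Set.Icc a b) s := by
    intro s hs
    have := (hasDerivAt_abs_rpow_mul hr (v s)).comp_hasDerivWithinAt s (hvderiv s hs)
    simpa [hgdef, mul_assoc, Function.comp_def] using this
  have habs : ContinuousOn (fun s => |v s| ^ r) (Set.Icc a b) :=
    (hvcont.abs).rpow_const (fun s _ => Or.inr hr.le)
  have hgcont : ContinuousOn g (Set.Icc a b) := (continuousOn_const.mul habs).mul hcont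
  have hsub : Set.uIcc y0 x ⊆ Set.Icc a b := Set.uIcc_subset_Icc hy0I hx
  have hftc : ∫ s in y0..x, g s =
      |v x| ^ r * v x - |v y0| ^ r * v y0 := by
    apply intervalIntegral.integral_eq_sub_of_hasDeriv_right ((habs.mul hvcont).mono hsub)
    · intro s hs
      have hsIoo : s ∈ Set.Ioo a b :=
        ⟨lt_of_le_of_lt (le_min hy0I.1 hx.1) hs.1,
         lt_of_lt_of_le hs.2 (max_le hy0I.2 hx.2)⟩
      exact ((hwderiv s (Set.Ioo_subset_Icc_self hsIoo)).hasDerivAt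
        (Icc_mem_nhds hsIoo.1 hsIoo.2)).hasDerivWithinAt
    · exact (hgcont.mono hsub).intervalIntegrable
  set A : ℝ := ∫ s in a..b, |v s| ^ p with hAdef
  set B : ℝ := ∫ s in a..b, (u' s) ^ 2 with hBdef
  have hA0 : 0 ≤ A := intervalIntegral.integral_nonneg hab.le (fun s _ => by positivity)
  have hB0 : 0 ≤ B := intervalIntegral.integral_nonneg hab.le (fun s _ => by positivity)
  -- Cauchy–Schwarz
  have hCS : ∫ s in a..b, |v s| ^ r * |u' s| ≤ A ^ ((1:ℝ)/2) * B ^ ((1:ℝ)/2) := by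
    set μ := volume.restrict (Set.Ioc a b) with hμ
    haveI : IsFiniteMeasure μ := by
      constructor
      rw [hμ, Measure.restrict_apply_univ, Real.volume_Ioc]
      exact ENNReal.ofReal_lt_top
    set F : ℝ → ℝ := fun s => |v s| ^ r with hF
    set G : ℝ → ℝ := fun s => |u' s| with hG
    have hconj : (2:ℝ).HolderConjugate 2 := Real.holderConjugate_iff.mpr ⟨one_lt_two, by norm_num⟩
    have hFm : AEStronglyMeasurable F μ :=
      (habs.mono Set.Ioc_subset_Icc_self).aestronglyMeasurable measurableSet_Ioc
    have hGm : AEStronglyMeasurable G μ :=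
      ((hcont.abs).mono Set.Ioc_subset_Icc_self).aestronglyMeasurable measurableSet_Ioc
    obtain ⟨C, hC⟩ := isCompact_Icc.exists_bound_of_continuousOn habs
    obtain ⟨D, hD⟩ := isCompact_Icc.exists_bound_of_continuousOn hcont.abs
    have hF2 : MemLp F (ENNReal.ofReal 2) μ := by
      refine (memLp_top_of_bound hFm C ?_).mono_exponent le_top
      rw [hμ]
      exact (ae_restrict_iff' measurableSet_Ioc).mpr
        (Filter.Eventually.of_forall (fun s hs => hC s (Set.Ioc_subset_Icc_self hs)))
    have hG2 : MemLp G (ENNReal.ofReal 2) μ := by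
      refine (memLp_top_of_bound hGm D ?_).mono_exponent le_top
      rw [hμ]
      exact (ae_restrict_iff' measurableSet_Ioc).mpr
        (Filter.Eventually.of_forall (fun s hs => hD s (Set.Ioc_subset_Icc_self hs)))
    have hH := integral_mul_le_Lp_mul_Lq_of_nonneg hconj
      (Filter.Eventually.of_forall (fun s => Real.rpow_nonneg (abs_nonneg _) _) :
        (0:ℝ → ℝ) ≤ᵐ[μ] F)
      (Filter.Eventually.of_forall (fun s => abs_nonneg _) : (0:ℝ → ℝ) ≤ᵐ[μ] G)
      hF2 hG2
    have hFe : ∀ s, F s ^ (2:ℝ) = |v s| ^ p := by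
      intro s
      rw [hF]
      simp only
      rw [← Real.rpow_mul (abs_nonneg _)]
      congr 1
      rw [hrdef]; ring
    have hGe : ∀ s, G s ^ (2:ℝ) = (u' s) ^ 2 := by
      intro s
      rw [hG]
      simp only
      rw [show (2:ℝ) = ((2:ℕ):ℝ) by norm_num, Real.rpow_natCast, sq_abs]
    rw [intervalIntegral.integral_of_le hab.le]
    rw [hAdef, hBdef, intervalIntegral.integral_of_le hab.le,
      intervalIntegral.integral_of_le hab.le]
    calc ∫ s in Set.Ioc a b, |v s| ^ r * |u' s| = ∫ s, F s * G s ∂μ := by rw [hμ]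
      _ ≤ (∫ s, F s ^ (2:ℝ) ∂μ) ^ ((1:ℝ)/2) * (∫ s, G s ^ (2:ℝ) ∂μ) ^ ((1:ℝ)/2) := hH
      _ = (∫ s in Set.Ioc a b, |v s| ^ p) ^ ((1:ℝ)/2) *
          (∫ s in Set.Ioc a b, (u' s) ^ 2) ^ ((1:ℝ)/2) := by
          rw [hμ]
          congr 1
          · congr 1
            exact integral_congr_ae (Filter.Eventually.of_forall (fun s => hFe s))
          · congr 1
            exact integral_congr_ae (Filter.Eventually.of_forall (fun s => hGe s))
  -- key estimate
  have hkey : |v x| ^ (r + 1) ≤ (r + 1) * (A ^ ((1:ℝ)/2) * B ^ ((1:ℝ)/2)) := by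
    have h1 : |v x| ^ (r + 1) = |(|v x| ^ r * v x)| := by
      by_cases hvx : v x = 0
      · simp [hvx, Real.zero_rpow (by positivity : r + 1 ≠ 0)]
      · rw [abs_mul, abs_of_nonneg (Real.rpow_nonneg (abs_nonneg _) _),
          Real.rpow_add_one (abs_ne_zero.mpr hvx)]
    have hwy0 : |v y0| ^ r * v y0 = 0 := by simp [hy0]
    have h2 : |(|v x| ^ r * v x)| = |∫ s in y0..x, g s| := by
      rw [hftc, hwy0, sub_zero]
    have h3 : |∫ s in y0..x, g s| ≤ |(∫ s in y0..x, |g s|)| := by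
      simpa using intervalIntegral.norm_integral_le_abs_integral_norm
        (a := y0) (b := x) (f := g) (μ := volume)
    have h4 : |(∫ s in y0..x, |g s|)| ≤ ∫ s in a..b, |g s| := by
      have h4' : |(∫ s in y0..x, |g s|)| ≤ |(∫ s in a..b, |g s|)| := by
        apply intervalIntegral.abs_integral_mono_interval
        · intro t ht
          rw [Set.uIoc_of_le hab.le]
          rcases Set.mem_uIoc.mp ht with h | h
          · exact ⟨lt_of_le_of_lt hy0I.1 h.1, le_trans h.2 hx.2⟩
          · exact ⟨lt_of_le_of_lt hx.1 h.1, le_trans h.2 hy0I.2⟩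
        · exact Filter.Eventually.of_forall (fun s => abs_nonneg _)
        · exact ((hgcont.abs).mono (by rw [Set.uIcc_of_le hab.le])).intervalIntegrable
      refine h4'.trans (le_of_eq (abs_of_nonneg ?_))
      exact intervalIntegral.integral_nonneg hab.le (fun s _ => abs_nonneg _)
    have h5 : ∫ s in a..b, |g s| = (r + 1) * ∫ s in a..b, |v s| ^ r * |u' s| := by
      rw [← intervalIntegral.integral_const_mul]
      apply intervalIntegral.integral_congr
      intro s _
      simp only [hgdef]
      rw [abs_mul, abs_mul, abs_of_nonneg (by positivity : (0:ℝ) ≤ r + 1),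
        abs_of_nonneg (Real.rpow_nonneg (abs_nonneg _) _), mul_assoc]
    calc |v x| ^ (r + 1) = |∫ s in y0..x, g s| := by rw [h1, h2]
      _ ≤ |(∫ s in y0..x, |g s|)| := h3
      _ ≤ ∫ s in a..b, |g s| := h4
      _ = (r + 1) * ∫ s in a..b, |v s| ^ r * |u' s| := h5
      _ ≤ (r + 1) * (A ^ ((1:ℝ)/2) * B ^ ((1:ℝ)/2)) := by
          apply mul_le_mul_of_nonneg_left hCS (by positivity)
  -- final algebra
  show |v x| ≤ ((p + 2) / 2) ^ (2 / (p + 2)) * A ^ (1 / (p + 2)) * B ^ (1 / (p + 2))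
  have hq : r + 1 = (p + 2) / 2 := by rw [hrdef]; ring
  have hqpos : (0:ℝ) < r + 1 := by positivity
  have hinv : 1 / (r + 1) = 2 / (p + 2) := by rw [hq]; field_simp
  calc |v x| = (|v x| ^ (r + 1)) ^ (1 / (r + 1)) := by
        rw [← Real.rpow_mul (abs_nonneg _), mul_one_div_cancel hqpos.ne', Real.rpow_one]
    _ ≤ ((r + 1) * (A ^ ((1:ℝ)/2) * B ^ ((1:ℝ)/2))) ^ (1 / (r + 1)) :=
        Real.rpow_le_rpow (Real.rpow_nonneg (abs_nonneg _) _) hkey (by positivity)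
    _ = ((p + 2) / 2) ^ (2 / (p + 2)) * A ^ (1 / (p + 2)) * B ^ (1 / (p + 2)) := by
        rw [Real.mul_rpow hqpos.le (by positivity),
          Real.mul_rpow (Real.rpow_nonneg hA0 _) (Real.rpow_nonneg hB0 _),
          ← Real.rpow_mul hA0, ← Real.rpow_mul hB0, hinv, hq,
          show (1:ℝ)/2 * (2/(p+2)) = 1/(p+2) by field_simp]
        ring
end

section
/- Let a < b be real numbers, let I = [a, b], and let u : ℝ → ℝ be continuously differentiable on I. Then for every x ∈ I one has exp(|u(x)|) ≤ (∫_a^b exp(|u(s)|) ds) · (∫_a^b u'(s)² ds) + 2(b−a)^{−1} ∫_a^b exp(|u(s)|) ds; equivalently, ‖exp(|u|)‖_{L^∞(I)} ≤ ‖exp(|u|)‖_{L¹(I)} ‖u'‖_{L²(I)}² + 2·ℒ¹(I)^{−1}‖exp(|u|)‖_{L¹(I)}. -/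
/-!
Let `g = exp |u|` and let `M` be its maximum on `I = [a, b]`. Since `|(exp (±u))'| ≤ |u'| g`,
the fundamental theorem of calculus gives `g x ≤ g y + ∫ |u'| g` for all `x, y ∈ I`, and averaging
over `y` yields `M ≤ (b - a)⁻¹ ∫ g + ∫ |u'| g`. Young's inequality `2 |u'| g ≤ B u'² + g² / B`
with `B = ∫ g` and `g² ≤ M g` bounds `2 ∫ |u'| g` by `B ∫ u'² + M`, and the extra `M / 2` is
absorbed into the left-hand side.
-/

open MeasureTheory Set

theorem abs_sub_le_integral_abs_deriv {f f' : ℝ → ℝ} {a b x y : ℝ}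
    (hf : ∀ t ∈ Icc a b, HasDerivWithinAt f (f' t) (Icc a b) t)
    (hf' : IntervalIntegrable f' volume a b) (hx : x ∈ Icc a b) (hy : y ∈ Icc a b) :
    |f x - f y| ≤ ∫ t in a..b, |f' t| := by
  wlog hyx : y ≤ x generalizing x y
  · rw [abs_sub_comm]
    exact this hy hx (le_of_not_ge hyx)
  have hsub : Icc y x ⊆ Icc a b := Icc_subset_Icc hy.1 hx.2
  have hint : IntervalIntegrable f' volume y x :=
    hf'.mono_set (by rwa [uIcc_of_le hyx, uIcc_of_le (hy.1.trans hy.2)])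
  have ftc : ∫ t in y..x, f' t = f x - f y := by
    refine intervalIntegral.integral_eq_sub_of_hasDeriv_right_of_le hyx
      (fun t ht => (hf t (hsub ht)).continuousWithinAt.mono hsub) (fun t ht => ?_) hint
    have ht' : t ∈ Ioo a b := ⟨hy.1.trans_lt ht.1, ht.2.trans_le hx.2⟩
    exact ((hf t (Ioo_subset_Icc_self ht')).hasDerivAt
      (Icc_mem_nhds ht'.1 ht'.2)).hasDerivWithinAt
  rw [← ftc]
  calc |∫ t in y..x, f' t| ≤ ∫ t in y..x, |f' t| :=
        intervalIntegral.abs_integral_le_integral_abs hyx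
    _ ≤ ∫ t in a..b, |f' t| :=
        intervalIntegral.integral_mono_interval hy.1 hyx hx.2
          (Filter.Eventually.of_forall fun t => abs_nonneg _) hf'.abs

theorem exp_abs_le_exp_abs_add_integral {u u' : ℝ → ℝ} {a b x y : ℝ}
    (hu : ∀ t ∈ Icc a b, HasDerivWithinAt u (u' t) (Icc a b) t)
    (hu' : ContinuousOn u' (Icc a b)) (hx : x ∈ Icc a b) (hy : y ∈ Icc a b) :
    Real.exp |u x| ≤ Real.exp |u y| + ∫ t in a..b, |u' t| * Real.exp |u t| := by
  have hab : a ≤ b := hx.1.trans hx.2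
  have hcont : ContinuousOn u (Icc a b) := fun t ht => (hu t ht).continuousWithinAt
  suffices h : ∀ σ : ℝ, |σ| = 1 →
      Real.exp (σ * u x) ≤ Real.exp |u y| + ∫ t in a..b, |u' t| * Real.exp |u t| by
    rcases abs_choice (u x) with hux | hux
    · simpa [hux] using h 1 abs_one
    · simpa [hux] using h (-1) (by simp)
  intro σ hσ
  have hderiv : ∀ t ∈ Icc a b, HasDerivWithinAt (fun t => Real.exp (σ * u t))
      (Real.exp (σ * u t) * (σ * u' t)) (Icc a b) t :=
    fun t ht => ((hu t ht).const_mul σ).exp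
  have hcont' : ContinuousOn (fun t => Real.exp (σ * u t) * (σ * u' t)) (Icc a b) :=
    (Real.continuous_exp.comp_continuousOn (continuousOn_const.mul hcont)).mul
      (continuousOn_const.mul hu')
  have hvar := abs_sub_le_integral_abs_deriv hderiv
    (hcont'.intervalIntegrable_of_Icc hab) hx hy
  have hdom : ∫ t in a..b, |Real.exp (σ * u t) * (σ * u' t)|
      ≤ ∫ t in a..b, |u' t| * Real.exp |u t| := by
    refine intervalIntegral.integral_mono_on hab (hcont'.intervalIntegrable_of_Icc hab).abs
      ((hu'.abs.mul (Real.continuous_exp.comp_continuousOn hcont.abs)).intervalIntegrable_of_Icc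
        hab) fun t _ => ?_
    rw [abs_mul, abs_mul, hσ, one_mul, Real.abs_exp, mul_comm]
    gcongr
    exact (le_abs_self _).trans (by rw [abs_mul, hσ, one_mul])
  have hσy : Real.exp (σ * u y) ≤ Real.exp |u y| :=
    Real.exp_le_exp.2 ((le_abs_self _).trans (by rw [abs_mul, hσ, one_mul]))
  linarith [le_abs_self (Real.exp (σ * u x) - Real.exp (σ * u y))]

theorem le_inv_sub_mul_integral_of_forall_le {g : ℝ → ℝ} {a b c : ℝ} (hab : a < b)
    (hg : IntervalIntegrable g volume a b) (h : ∀ y ∈ Icc a b, c ≤ g y) :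
    c ≤ (b - a)⁻¹ * ∫ y in a..b, g y := by
  have hint := intervalIntegral.integral_mono_on hab.le intervalIntegrable_const hg h
  rw [intervalIntegral.integral_const, smul_eq_mul] at hint
  rwa [le_inv_mul_iff₀ (sub_pos.2 hab)]

theorem two_mul_integral_abs_mul_le {f g : ℝ → ℝ} {a b t M : ℝ} (hab : a ≤ b) (ht : 0 < t)
    (hf : IntervalIntegrable (fun s => f s ^ 2) volume a b) (hg : IntervalIntegrable g volume a b)
    (hfg : IntervalIntegrable (fun s => |f s| * g s) volume a b)
    (hg0 : ∀ s ∈ Icc a b, 0 ≤ g s) (hgM : ∀ s ∈ Icc a b, g s ≤ M) :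
    2 * ∫ s in a..b, |f s| * g s ≤ t * (∫ s in a..b, f s ^ 2) + M / t * ∫ s in a..b, g s := by
  simp only [← intervalIntegral.integral_const_mul]
  rw [← intervalIntegral.integral_add (hf.const_mul t) (hg.const_mul _)]
  refine intervalIntegral.integral_mono_on hab (hfg.const_mul 2)
    ((hf.const_mul t).add (hg.const_mul _)) fun s hs => le_of_mul_le_mul_left ?_ ht
  -- Young: `2 t |f| g ≤ t² f² + g²`, and `g² ≤ M g`.
  rw [mul_add, ← mul_assoc t (M / t), mul_div_cancel₀ _ ht.ne', ← sq_abs (f s)]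
  nlinarith [sq_nonneg (t * |f s| - g s), mul_nonneg (sub_nonneg.2 (hgM s hs)) (hg0 s hs)]

/-- One-dimensional exponential sup-bound (Lemma 3.2, estimate (3.11) of the paper),
for continuously differentiable functions. -/
theorem oneD_exponential_bound
    (a b : ℝ) (hab : a < b)
    (u u' : ℝ → ℝ)
    (hderiv : ∀ x ∈ Set.Icc a b, HasDerivWithinAt u (u' x) (Set.Icc a b) x)
    (hcont : ContinuousOn u' (Set.Icc a b)) :
    ∀ x ∈ Set.Icc a b,
      Real.exp |u x| ≤
        (∫ s in a..b, Real.exp |u s|) * (∫ s in a..b, (u' s) ^ 2)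
          + 2 * (b - a)⁻¹ * ∫ s in a..b, Real.exp |u s| := by
  intro x hx
  have hu : ContinuousOn u (Icc a b) := fun t ht => (hderiv t ht).continuousWithinAt
  have hg : ContinuousOn (fun s => Real.exp |u s|) (Icc a b) :=
    Real.continuous_exp.comp_continuousOn hu.abs
  have hgint : IntervalIntegrable (fun s => Real.exp |u s|) volume a b :=
    hg.intervalIntegrable_of_Icc hab.le
  obtain ⟨x₀, hx₀, hmax⟩ := isCompact_Icc.exists_isMaxOn (nonempty_Icc.2 hab.le) hg
  have hM : ∀ s ∈ Icc a b, Real.exp |u s| ≤ Real.exp |u x₀| := hmax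
  have hmean : Real.exp |u x₀| - ∫ s in a..b, |u' s| * Real.exp |u s|
      ≤ (b - a)⁻¹ * ∫ s in a..b, Real.exp |u s| :=
    le_inv_sub_mul_integral_of_forall_le hab hgint fun y hy => by
      linarith [exp_abs_le_exp_abs_add_integral hderiv hcont hx₀ hy]
  have hB : 0 < ∫ s in a..b, Real.exp |u s| :=
    intervalIntegral.intervalIntegral_pos_of_pos_on hgint (fun s _ => Real.exp_pos _) hab
  have hyoung := two_mul_integral_abs_mul_le hab.le hB
    ((hcont.pow 2).intervalIntegrable_of_Icc hab.le) hgint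
    ((hcont.abs.mul hg).intervalIntegrable_of_Icc hab.le) (fun s _ => (Real.exp_pos _).le) hM
  rw [div_mul_cancel₀ _ hB.ne'] at hyoung
  linarith [hM x hx]
end

section
/- Let 1 ≤ μ < 2 be a real number and set t₀ := ((μ−1)/(2−μ))^{1/(2−μ)}. Then there exists a real number t₁ > t₀ with t₁ > 0 such that the continuous function Φ_μ : [0, ∞) → [0, ∞) defined by Φ_μ(t) = (exp(t₁^{2−μ}) − 1)·t/t₁ for 0 ≤ t ≤ t₁ and Φ_μ(t) = exp(t^{2−μ}) − 1 for t ≥ t₁ is convex on [0, ∞). -/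
open Real Set

lemma phi_aux (α : ℝ) (hα0 : 0 < α) (hα1 : α ≤ 1) (t₁ : ℝ) (ht₁ : 0 < t₁)
    (hx1 : 1 / α ≤ t₁ ^ α) :
    ConvexOn ℝ (Set.Ici (0 : ℝ))
      (fun t : ℝ => if t ≤ t₁ then (Real.exp (t₁ ^ α) - 1) * t / t₁
        else Real.exp (t ^ α) - 1) := by
  set g : ℝ → ℝ := fun t => Real.exp (t ^ α) - 1 with hg
  set c : ℝ := (Real.exp (t₁ ^ α) - 1) / t₁ with hc
  have hct₁ : c * t₁ = g t₁ := by
    rw [hc, div_mul_cancel₀]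
    exact ht₁.ne'
  -- derivative of g
  have hg' : ∀ t : ℝ, 0 < t →
      HasDerivAt g (Real.exp (t ^ α) * (α * t ^ (α - 1))) t := by
    intro t ht
    exact ((Real.hasDerivAt_rpow_const (Or.inl ht.ne')).exp).sub_const 1
  -- u and its monotonicity
  set u : ℝ → ℝ := fun t => t ^ α + (α - 1) * Real.log t with hu
  have hu' : ∀ t : ℝ, 0 < t →
      HasDerivAt u (α * t ^ (α - 1) + (α - 1) * t⁻¹) t := by
    intro t ht
    exact (Real.hasDerivAt_rpow_const (Or.inl ht.ne')).add
      ((Real.hasDerivAt_log ht.ne').const_mul (α - 1))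
  have hpos : ∀ t : ℝ, t₁ ≤ t → 0 < t := fun t ht => lt_of_lt_of_le ht₁ ht
  have htα : ∀ t : ℝ, t₁ ≤ t → 1 ≤ α * t ^ α := by
    intro t ht
    have h := le_trans hx1 (Real.rpow_le_rpow ht₁.le ht hα0.le)
    rw [div_le_iff₀ hα0] at h; linarith
  have hu'nonneg : ∀ t : ℝ, t₁ ≤ t → 0 ≤ α * t ^ (α - 1) + (α - 1) * t⁻¹ := by
    intro t ht
    have ht0 := hpos t ht
    have h1 : t ^ (α - 1) = t ^ α / t := by
      rw [Real.rpow_sub ht0, Real.rpow_one]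
    have h2 := htα t ht
    rw [h1]
    have hrw : α * (t ^ α / t) + (α - 1) * t⁻¹ = (α * t ^ α + (α - 1)) / t := by
      field_simp
    rw [hrw]
    apply div_nonneg _ ht0.le
    linarith
  have humono : MonotoneOn u (Set.Ici t₁) := by
    apply monotoneOn_of_deriv_nonneg (convex_Ici t₁)
    · intro t ht
      exact (hu' t (hpos t ht)).continuousAt.continuousWithinAt
    · rw [interior_Ici]
      intro t ht
      exact (hu' t (hpos t ht.le)).differentiableAt.differentiableWithinAt
    · rw [interior_Ici]
      intro t ht
      rw [(hu' t (hpos t ht.le)).deriv]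
      exact hu'nonneg t ht.le
  -- D = α * exp ∘ u, monotone
  have hDeq : ∀ t : ℝ, 0 < t →
      Real.exp (t ^ α) * (α * t ^ (α - 1)) = α * Real.exp (u t) := by
    intro t ht
    rw [hu]
    simp only
    rw [Real.rpow_def_of_pos ht (α - 1), Real.exp_add]
    ring_nf
  have hDmono : MonotoneOn (fun t => Real.exp (t ^ α) * (α * t ^ (α - 1)))
      (Set.Ici t₁) := by
    intro a ha b hb hab
    simp only
    rw [hDeq a (hpos a ha), hDeq b (hpos b hb)]
    exact mul_le_mul_of_nonneg_left (Real.exp_le_exp.2 (humono ha hb hab)) hα0.le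
  -- convexity of g on [t₁, ∞)
  have hgconv : ConvexOn ℝ (Set.Ici t₁) g := by
    apply MonotoneOn.convexOn_of_deriv (convex_Ici t₁)
    · intro t ht
      exact (hg' t (hpos t ht)).continuousAt.continuousWithinAt
    · rw [interior_Ici]
      intro t ht
      exact (hg' t (hpos t ht.le)).differentiableAt.differentiableWithinAt
    · rw [interior_Ici]
      intro a ha b hb hab
      rw [(hg' a (hpos a ha.le)).deriv, (hg' b (hpos b hb.le)).deriv]
      exact hDmono (Set.mem_Ici.2 (le_of_lt ha)) (Set.mem_Ici.2 (le_of_lt hb)) hab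
  -- the derivative at t₁ dominates the chord slope c
  have hDc : ∀ t : ℝ, t₁ ≤ t → c ≤ Real.exp (t ^ α) * (α * t ^ (α - 1)) := by
    intro t ht
    refine le_trans ?_ (hDmono (le_refl t₁ : t₁ ∈ Set.Ici t₁) ht ht)
    show c ≤ Real.exp (t₁ ^ α) * (α * t₁ ^ (α - 1))
    rw [hc]
    have h1 : t₁ ^ (α - 1) = t₁ ^ α / t₁ := by
      rw [Real.rpow_sub ht₁, Real.rpow_one]
    rw [h1]
    rw [div_le_iff₀ ht₁]
    have h2 := htα t₁ le_rfl
    have h3 : (0:ℝ) < Real.exp (t₁ ^ α) := Real.exp_pos _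
    have : Real.exp (t₁ ^ α) * (α * (t₁ ^ α / t₁)) * t₁
        = Real.exp (t₁ ^ α) * (α * t₁ ^ α) := by
      field_simp
    rw [this]
    nlinarith
  -- the line lies below g on [t₁, ∞)
  have hline : ∀ t : ℝ, t₁ ≤ t → c * t ≤ g t := by
    intro t ht
    set ψ : ℝ → ℝ := fun s => g s - c * s with hψ
    have hψ' : ∀ s : ℝ, 0 < s →
        HasDerivAt ψ (Real.exp (s ^ α) * (α * s ^ (α - 1)) - c * 1) s := by
      intro s hs
      exact (hg' s hs).sub ((hasDerivAt_id s).const_mul c)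
    have hψmono : MonotoneOn ψ (Set.Ici t₁) := by
      apply monotoneOn_of_deriv_nonneg (convex_Ici t₁)
      · intro s hs
        exact (hψ' s (hpos s hs)).continuousAt.continuousWithinAt
      · rw [interior_Ici]
        intro s hs
        exact (hψ' s (hpos s hs.le)).differentiableAt.differentiableWithinAt
      · rw [interior_Ici]
        intro s hs
        rw [(hψ' s (hpos s hs.le)).deriv]
        have := hDc s hs.le
        rw [mul_one]
        linarith
    have h0 : ψ t₁ = 0 := by
      rw [hψ]; simp only; rw [hct₁]; ring
    have := hψmono (le_refl t₁ : t₁ ∈ Set.Ici t₁) ht ht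
    rw [h0] at this
    have : (0:ℝ) ≤ g t - c * t := this
    linarith
  -- assemble
  apply convexOn_of_slope_mono_adjacent (convex_Ici 0)
  intro x y z hx hz hxy hyz
  have hcx : ∀ t : ℝ, (Real.exp (t₁ ^ α) - 1) * t / t₁ = c * t := by
    intro t; rw [hc]; ring
  by_cases hzle : z ≤ t₁
  · have hyle : y ≤ t₁ := le_of_lt (lt_of_lt_of_le hyz hzle)
    have hxle : x ≤ t₁ := le_of_lt (lt_of_lt_of_le hxy hyle)
    simp only [if_pos hxle, if_pos hyle, if_pos hzle, hcx]
    rw [div_le_div_iff₀ (sub_pos.2 hxy) (sub_pos.2 hyz)]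
    ring_nf
    nlinarith [sub_pos.2 hxy, sub_pos.2 hyz]
  · push_neg at hzle
    by_cases hyle : y ≤ t₁
    · have hxle : x ≤ t₁ := le_of_lt (lt_of_lt_of_le hxy hyle)
      simp only [if_pos hxle, if_pos hyle, if_neg (not_le.2 hzle), hcx]
      rw [div_le_div_iff₀ (sub_pos.2 hxy) (sub_pos.2 hyz)]
      have hz1 : c * z ≤ Real.exp (z ^ α) - 1 := hline z hzle.le
      nlinarith [mul_nonneg (sub_nonneg.2 hz1) (sub_pos.2 hxy).le]
    · push_neg at hyle
      by_cases hxle : x ≤ t₁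
      · simp only [if_pos hxle, if_neg (not_le.2 hyle), if_neg (not_le.2 hzle), hcx]
        have hS := hgconv.slope_mono_adjacent (le_refl t₁ : t₁ ∈ Set.Ici t₁)
          (hzle.le.trans (le_refl z) : z ∈ Set.Ici t₁) hyle (hyz)
        -- slope(x,y) ≤ slope(t₁,y)
        have hyc := hline y hyle.le
        have hstep : (g y - c * x) / (y - x) ≤ (g y - g t₁) / (y - t₁) := by
          rw [div_le_div_iff₀ (sub_pos.2 hxy) (sub_pos.2 hyle)]
          rw [← hct₁]
          nlinarith [mul_nonneg (sub_nonneg.2 hxle) (sub_nonneg.2 hyc)]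
        exact hstep.trans hS
      · push_neg at hxle
        simp only [if_neg (not_le.2 hxle), if_neg (not_le.2 (hxle.trans hxy)),
          if_neg (not_le.2 hzle)]
        exact hgconv.slope_mono_adjacent (hxle.le : x ∈ Set.Ici t₁)
          (hzle.le : z ∈ Set.Ici t₁) hxy hyz


/-- Existence of `t₁ > t₀` such that the truncated-linear modification `Φ_μ` of
`t ↦ exp(t^(2-μ)) - 1` is convex on `[0, ∞)` (Section 2.2.5 of the paper). -/
theorem exists_t1_Phi_mu_convex
    (μ : ℝ) (hμ1 : 1 ≤ μ) (hμ2 : μ < 2) :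
    ∃ t₁ : ℝ, ((μ - 1) / (2 - μ)) ^ ((1 : ℝ) / (2 - μ)) < t₁ ∧ 0 < t₁ ∧
      ConvexOn ℝ (Set.Ici (0 : ℝ))
        (fun t : ℝ =>
          if t ≤ t₁ then (Real.exp (t₁ ^ (2 - μ)) - 1) * t / t₁
          else Real.exp (t ^ (2 - μ)) - 1) := by
  have hα0 : (0:ℝ) < 2 - μ := by linarith
  have hα1 : 2 - μ ≤ 1 := by linarith
  set α := 2 - μ with hαdef
  set b : ℝ := (1 / α) ^ ((1:ℝ) / α) with hb
  have hbpos : 0 < b := Real.rpow_pos_of_pos (by positivity) _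
  refine ⟨b + 1, ?_, by linarith, ?_⟩
  · calc ((μ - 1) / α) ^ ((1:ℝ) / α)
        ≤ (1 / α) ^ ((1:ℝ) / α) := by
          apply Real.rpow_le_rpow (div_nonneg (by linarith) hα0.le)
            (by gcongr <;> linarith) (by positivity)
      _ < b + 1 := by rw [← hb]; linarith
  · apply phi_aux α hα0 hα1 (b + 1) (by linarith)
    have h1 : b ^ α = 1 / α := by
      rw [hb, ← Real.rpow_mul (by positivity), one_div_mul_cancel hα0.ne',
        Real.rpow_one]
    rw [← h1]
    exact Real.rpow_le_rpow hbpos.le (by linarith) hα0.le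
end

section
/- Let E be a finite-dimensional real inner product space, let 1 ≤ q < ∞ be a real number, and define ⟨z⟩_q := ((1 + ‖z‖²)^{1/2} − 1)^q for z ∈ E. Then there exists a constant L_q > 0 such that |⟨z⟩_q − ⟨z'⟩_q| ≤ L_q (1 + ‖z‖ + ‖z'‖)^{q−1} ‖z − z'‖ for all z, z' ∈ E. -/
/-!
The map `g z = √(1 + ‖z‖²) - 1` is 1-Lipschitz, being `‖(1, z)‖ - 1` for the L² norm on `ℝ × E`,
and takes values in `[0, ‖z‖]`. On `[0, M]` the derivative of `t ↦ t ^ q` is at most `q M ^ (q - 1)`,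
so the mean value inequality with `M = 1 + ‖z‖ + ‖z'‖` gives the estimate with `L = q`.
-/

open Real Set

theorem Real.abs_rpow_sub_rpow_le_of_mem_Icc {q M a b : ℝ} (hq : 1 ≤ q) (ha : a ∈ Icc 0 M)
    (hb : b ∈ Icc 0 M) : |a ^ q - b ^ q| ≤ q * M ^ (q - 1) * |a - b| := by
  have hderiv_le : ∀ x ∈ Icc 0 M, ‖q * x ^ (q - 1)‖ ≤ q * M ^ (q - 1) := fun x hx => by
    rw [norm_mul, norm_of_nonneg (by linarith), norm_of_nonneg (rpow_nonneg hx.1 _)]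
    gcongr
    exacts [hx.1, hx.2]
  exact (convex_Icc 0 M).norm_image_sub_le_of_norm_hasDerivWithin_le
    (fun x _ => (hasDerivAt_rpow_const (Or.inr hq)).hasDerivWithinAt) hderiv_le hb ha

theorem abs_sqrt_one_add_norm_sq_sub_le {E : Type*} [SeminormedAddCommGroup E] (x y : E) :
    |√(1 + ‖x‖ ^ 2) - √(1 + ‖y‖ ^ 2)| ≤ ‖x - y‖ := by
  have hnorm : ∀ v : E, ‖WithLp.toLp 2 ((1 : ℝ), v)‖ = √(1 + ‖v‖ ^ 2) := fun v => by
    simp [WithLp.prod_norm_eq_of_L2]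
  have := abs_norm_sub_norm_le (WithLp.toLp 2 ((1 : ℝ), x)) (WithLp.toLp 2 ((1 : ℝ), y))
  rw [hnorm, hnorm, ← WithLp.toLp_sub, Prod.mk_sub_mk, sub_self] at this
  simpa [WithLp.prod_norm_eq_of_L2] using this

theorem sqrt_one_add_norm_sq_sub_one_mem_Icc {E : Type*} [SeminormedAddCommGroup E] (x : E) :
    √(1 + ‖x‖ ^ 2) - 1 ∈ Icc 0 ‖x‖ := by
  have hle : |√(1 + ‖x‖ ^ 2) - 1| ≤ ‖x‖ := by
    simpa using abs_sqrt_one_add_norm_sq_sub_le x 0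
  exact ⟨sub_nonneg.2 (one_le_sqrt.2 (by simp)), (le_abs_self _).trans hle⟩

theorem angle_q_lipschitz_type_general
    (E : Type*) [NormedAddCommGroup E]
    (q : ℝ) (hq : 1 ≤ q) :
    ∃ L : ℝ, 0 < L ∧ ∀ z z' : E,
      |(Real.sqrt (1 + ‖z‖ ^ 2) - 1) ^ q - (Real.sqrt (1 + ‖z'‖ ^ 2) - 1) ^ q|
        ≤ L * (1 + ‖z‖ + ‖z'‖) ^ (q - 1) * ‖z - z'‖ := by
  refine ⟨q, by linarith, fun z z' => ?_⟩
  have hz : √(1 + ‖z‖ ^ 2) - 1 ∈ Icc 0 (1 + ‖z‖ + ‖z'‖) :=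
    Icc_subset_Icc_right (by linarith [norm_nonneg z']) (sqrt_one_add_norm_sq_sub_one_mem_Icc z)
  have hz' : √(1 + ‖z'‖ ^ 2) - 1 ∈ Icc 0 (1 + ‖z‖ + ‖z'‖) :=
    Icc_subset_Icc_right (by linarith [norm_nonneg z]) (sqrt_one_add_norm_sq_sub_one_mem_Icc z')
  calc _ ≤ q * (1 + ‖z‖ + ‖z'‖) ^ (q - 1) * |√(1 + ‖z‖ ^ 2) - 1 - (√(1 + ‖z'‖ ^ 2) - 1)| :=
        abs_rpow_sub_rpow_le_of_mem_Icc hq hz hz'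
    _ ≤ q * (1 + ‖z‖ + ‖z'‖) ^ (q - 1) * ‖z - z'‖ := by
        rw [sub_sub_sub_cancel_right]
        gcongr
        exact abs_sqrt_one_add_norm_sq_sub_le z z'

/-- Lipschitz-type estimate (2.12) of the paper for `⟨z⟩_q = ((1+‖z‖²)^(1/2) - 1)^q`. -/
theorem angle_q_lipschitz_type
    (E : Type*) [NormedAddCommGroup E] [InnerProductSpace ℝ E] [FiniteDimensional ℝ E]
    (q : ℝ) (hq : 1 ≤ q) :
    ∃ L : ℝ, 0 < L ∧ ∀ z z' : E,
      |(Real.sqrt (1 + ‖z‖ ^ 2) - 1) ^ q - (Real.sqrt (1 + ‖z'‖ ^ 2) - 1) ^ q|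
        ≤ L * (1 + ‖z‖ + ‖z'‖) ^ (q - 1) * ‖z - z'‖ :=
  angle_q_lipschitz_type_general E q hq
end

section
/- Let E be a finite-dimensional real inner product space, let q ≥ 2 be a real number, and define g : E → ℝ by g(z) := ((1 + ‖z‖²)^{1/2} − 1)^q. Then g is twice continuously differentiable on E and for all z, w ∈ E the second Fréchet derivative of g satisfies D²g(z)[w, w] ≥ q · ((1 + ‖z‖²)^{1/2} − 1)^{q−1} / (1 + ‖z‖²)^{1/2} · ‖w‖². -/
open Real

noncomputable def phi2aux (q t : ℝ) : ℝ :=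
  q * (q - 1) * (Real.sqrt (1 + t) - 1) ^ (q - 2) / (4 * (1 + t))
    - q * (Real.sqrt (1 + t) - 1) ^ (q - 1) / (4 * (1 + t) * Real.sqrt (1 + t))

lemma hasDerivAt_sqrt_one_add (t : ℝ) (ht : 0 ≤ t) :
    HasDerivAt (fun t : ℝ => Real.sqrt (1 + t)) (1 / (2 * Real.sqrt (1 + t))) t := by
  have h1 : (0:ℝ) < 1 + t := by linarith
  have := (Real.hasDerivAt_sqrt h1.ne').comp t ((hasDerivAt_id t).const_add 1)
  simpa [Function.comp_def] using this

lemma hasDerivAt_phi (q : ℝ) (hq : 1 ≤ q) (t : ℝ) (ht : 0 ≤ t) :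
    HasDerivAt (fun t : ℝ => (Real.sqrt (1 + t) - 1) ^ q)
      (q * (Real.sqrt (1 + t) - 1) ^ (q - 1) * (1 / (2 * Real.sqrt (1 + t)))) t := by
  have := ((hasDerivAt_sqrt_one_add t ht).sub_const 1).rpow_const (p := q) (Or.inr hq)
  convert this using 1
  ring

lemma hasDerivAt_phi' (q : ℝ) (hq : 2 ≤ q) (t : ℝ) (ht : 0 ≤ t) :
    HasDerivAt
      (fun t : ℝ => q * (Real.sqrt (1 + t) - 1) ^ (q - 1) * (1 / (2 * Real.sqrt (1 + t))))
      (phi2aux q t) t := by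
  have h1 : (0:ℝ) < 1 + t := by linarith
  have hspos : 0 < Real.sqrt (1 + t) := Real.sqrt_pos.2 h1
  have hs2 : Real.sqrt (1 + t) ^ 2 = 1 + t := Real.sq_sqrt h1.le
  have hu : HasDerivAt (fun t : ℝ => (Real.sqrt (1 + t) - 1) ^ (q - 1))
      ((q - 1) * (Real.sqrt (1 + t) - 1) ^ (q - 2) * (1 / (2 * Real.sqrt (1 + t)))) t := by
    have h := ((hasDerivAt_sqrt_one_add t ht).sub_const 1).rpow_const
      (p := q - 1) (Or.inr (by linarith))
    rw [show q - 1 - 1 = q - 2 by ring] at h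
    convert h using 1
    ring
  have hden : HasDerivAt (fun t : ℝ => 2 * Real.sqrt (1 + t))
      (2 * (1 / (2 * Real.sqrt (1 + t)))) t := (hasDerivAt_sqrt_one_add t ht).const_mul 2
  have hv : HasDerivAt (fun t : ℝ => 1 / (2 * Real.sqrt (1 + t)))
      ((0 * (2 * Real.sqrt (1 + t)) - 1 * (2 * (1 / (2 * Real.sqrt (1 + t)))))
        / (2 * Real.sqrt (1 + t)) ^ 2) t :=
    (hasDerivAt_const t (1:ℝ)).div hden (by positivity)
  have h := (hu.const_mul q).mul hv
  refine h.congr_deriv ?_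
  unfold phi2aux
  set s := Real.sqrt (1 + t) with hsdef
  have hs0 : s ≠ 0 := ne_of_gt hspos
  rw [← hs2]
  field_simp
  ring

lemma phi2aux_nonneg (q : ℝ) (hq : 2 ≤ q) (t : ℝ) (ht : 0 ≤ t) : 0 ≤ phi2aux q t := by
  have h1 : (0:ℝ) < 1 + t := by linarith
  have hspos : 0 < Real.sqrt (1 + t) := Real.sqrt_pos.2 h1
  have hs2 : Real.sqrt (1 + t) ^ 2 = 1 + t := Real.sq_sqrt h1.le
  have hs1 : 1 ≤ Real.sqrt (1 + t) := by nlinarith [Real.sqrt_nonneg (1 + t)]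
  unfold phi2aux
  set s := Real.sqrt (1 + t) with hsdef
  rw [← hs2]
  set A := s - 1 with hA
  have hA0 : 0 ≤ A := by rw [hA]; linarith
  rw [sub_nonneg, div_le_div_iff₀ (by positivity) (by positivity)]
  have hB : 0 ≤ A ^ (q - 2) := Real.rpow_nonneg hA0 _
  have hqpos : (0:ℝ) ≤ q := by linarith
  rcases eq_or_lt_of_le hA0 with h0 | h0
  · have hz : A ^ (q - 1) = 0 := by rw [← h0]; exact Real.zero_rpow (by linarith)
    rw [hz]
    have : 0 ≤ q * (q - 1) * A ^ (q - 2) * (4 * s ^ 2 * s) := by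
      apply mul_nonneg (mul_nonneg (mul_nonneg hqpos (by linarith)) hB)
      positivity
    linarith
  · have hsplit : A ^ (q - 1) = A ^ (q - 2) * A := by
      rw [show q - 1 = q - 2 + 1 by ring, Real.rpow_add_one h0.ne']
    rw [hsplit]
    have key : A ≤ (q - 1) * s := by nlinarith
    have hcoef : 0 ≤ q * A ^ (q - 2) * (4 * s ^ 2) :=
      mul_nonneg (mul_nonneg hqpos hB) (by positivity)
    have hmul := mul_le_mul_of_nonneg_left key hcoef
    nlinarith [hmul]

/-- Second-derivative lower bound (2.14) of the paper for `g(z) = ((1+‖z‖²)^(1/2) - 1)^q`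
with `q ≥ 2`: `g` is `C²` and `D²g(z)[w,w] ≥ q ((1+‖z‖²)^(1/2)-1)^(q-1)/(1+‖z‖²)^(1/2) ‖w‖²`. -/
theorem angle_q_second_deriv_lower
    (E : Type*) [NormedAddCommGroup E] [InnerProductSpace ℝ E] [FiniteDimensional ℝ E]
    (q : ℝ) (hq : 2 ≤ q) :
    ContDiff ℝ 2 (fun z : E => (Real.sqrt (1 + ‖z‖ ^ 2) - 1) ^ q) ∧
    ∀ z w : E,
      q * ((Real.sqrt (1 + ‖z‖ ^ 2) - 1) ^ (q - 1) / Real.sqrt (1 + ‖z‖ ^ 2)) * ‖w‖ ^ 2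
        ≤ iteratedFDeriv ℝ 2 (fun z : E => (Real.sqrt (1 + ‖z‖ ^ 2) - 1) ^ q) z ![w, w] := by
  have hpos : ∀ z : E, (0:ℝ) < 1 + ‖z‖ ^ 2 := fun z => by positivity
  constructor
  · have hbase : ContDiff ℝ 2 (fun z : E => Real.sqrt (1 + ‖z‖ ^ 2) - 1) :=
      ((contDiff_const.add (contDiff_norm_sq ℝ)).sqrt fun z => (hpos z).ne').sub contDiff_const
    have hr : ContDiff ℝ 2 (fun x : ℝ => x ^ q) := by
      have := Real.contDiff_rpow_const_of_le (n := 2) (by exact_mod_cast hq)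
      exact_mod_cast this
    exact hr.comp hbase
  · intro z w
    have hN : ∀ x : E, HasFDerivAt (fun z : E => ‖z‖ ^ 2) ((2:ℝ) • innerSL ℝ x) x := by
      intro x
      have h := (hasStrictFDerivAt_norm_sq x).hasFDerivAt
      convert h using 1
      ext y
      simp [two_smul]
    set L : E →L[ℝ] E →L[ℝ] ℝ := (2:ℝ) • innerSL ℝ with hL
    have hg' : ∀ x : E,
        HasFDerivAt (fun z : E => (Real.sqrt (1 + ‖z‖ ^ 2) - 1) ^ q)
          ((q * (Real.sqrt (1 + ‖x‖ ^ 2) - 1) ^ (q - 1) * (1 / (2 * Real.sqrt (1 + ‖x‖ ^ 2))))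
            • L x) x := by
      intro x
      exact (hasDerivAt_phi q (by linarith) _ (by positivity)).comp_hasFDerivAt x (hN x)
    have hfd : fderiv ℝ (fun z : E => (Real.sqrt (1 + ‖z‖ ^ 2) - 1) ^ q)
        = fun x : E =>
            (q * (Real.sqrt (1 + ‖x‖ ^ 2) - 1) ^ (q - 1) * (1 / (2 * Real.sqrt (1 + ‖x‖ ^ 2))))
              • L x := funext fun x => (hg' x).fderiv
    have hc : HasFDerivAt
        (fun x : E => q * (Real.sqrt (1 + ‖x‖ ^ 2) - 1) ^ (q - 1)
            * (1 / (2 * Real.sqrt (1 + ‖x‖ ^ 2))))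
        ((phi2aux q (‖z‖ ^ 2)) • L z) z :=
      (hasDerivAt_phi' q hq _ (by positivity)).comp_hasFDerivAt z (hN z)
    have hV : HasFDerivAt (fun x : E => L x) L z := L.hasFDerivAt
    have hF' : HasFDerivAt
        (fun x : E =>
          (q * (Real.sqrt (1 + ‖x‖ ^ 2) - 1) ^ (q - 1) * (1 / (2 * Real.sqrt (1 + ‖x‖ ^ 2))))
            • L x)
        ((q * (Real.sqrt (1 + ‖z‖ ^ 2) - 1) ^ (q - 1) * (1 / (2 * Real.sqrt (1 + ‖z‖ ^ 2)))) • L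
          + ((phi2aux q (‖z‖ ^ 2)) • L z).smulRight (L z)) z := hc.smul hV
    rw [iteratedFDeriv_two_apply, hfd, hF'.fderiv]
    simp only [Matrix.cons_val_zero, Matrix.cons_val_one, Matrix.head_cons,
      ContinuousLinearMap.add_apply, ContinuousLinearMap.smul_apply,
      ContinuousLinearMap.smulRight_apply, hL, innerSL_apply_apply, smul_eq_mul]
    have hiw : (inner ℝ w w : ℝ) = ‖w‖ ^ 2 := real_inner_self_eq_norm_sq w
    change _ ≤ _ * (2 * inner ℝ w w) + _ * (2 * inner ℝ z w) * (2 * inner ℝ z w)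
    rw [hiw]
    have hspos : 0 < Real.sqrt (1 + ‖z‖ ^ 2) := Real.sqrt_pos.2 (hpos z)
    have h2 : 0 ≤ phi2aux q (‖z‖ ^ 2) := phi2aux_nonneg q hq _ (by positivity)
    have hsq : 0 ≤ phi2aux q (‖z‖ ^ 2) * (2 * (inner ℝ z w : ℝ)) * (2 * (inner ℝ z w : ℝ)) := by
      rw [mul_assoc]
      exact mul_nonneg h2 (mul_self_nonneg _)
    have heq : q * ((Real.sqrt (1 + ‖z‖ ^ 2) - 1) ^ (q - 1) / Real.sqrt (1 + ‖z‖ ^ 2)) * ‖w‖ ^ 2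
        = q * (Real.sqrt (1 + ‖z‖ ^ 2) - 1) ^ (q - 1) * (1 / (2 * Real.sqrt (1 + ‖z‖ ^ 2)))
          * (2 * ‖w‖ ^ 2) := by
      field_simp
    linarith
end

section
/- Let E be a finite-dimensional real inner product space, let 1 ≤ μ ≤ 2 be a real number, and define V_μ : E → E by V_μ(z) := (1 + ‖z‖²)^{−μ/4} z. Then V_μ is continuously differentiable on E and for every z ∈ E the operator norm of its Fréchet derivative satisfies ‖DV_μ(z)‖ ≤ (1 + ‖z‖²)^{−μ/4}. In particular, ‖DV_μ(z)w‖² ≤ (1 + ‖z‖²)^{−μ/2} ‖w‖² for all z, w ∈ E. -/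
/-- The auxiliary function `V_μ(z) = (1+‖z‖²)^(-μ/4) z` is `C¹` with
`‖DV_μ(z)‖ ≤ (1+‖z‖²)^(-μ/4)`; in particular `‖DV_μ(z)w‖² ≤ (1+‖z‖²)^(-μ/2) ‖w‖²`
(estimate (5.21) of the paper). -/
theorem V_mu_deriv_bound
    (E : Type*) [NormedAddCommGroup E] [InnerProductSpace ℝ E] [FiniteDimensional ℝ E]
    (μ : ℝ) (hμ1 : 1 ≤ μ) (hμ2 : μ ≤ 2) :
    ContDiff ℝ 1 (fun z : E => ((1 + ‖z‖ ^ 2) ^ (-μ / 4)) • z) ∧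
    (∀ z : E,
      ‖fderiv ℝ (fun z : E => ((1 + ‖z‖ ^ 2) ^ (-μ / 4)) • z) z‖
        ≤ (1 + ‖z‖ ^ 2) ^ (-μ / 4)) ∧
    (∀ z w : E,
      ‖fderiv ℝ (fun z : E => ((1 + ‖z‖ ^ 2) ^ (-μ / 4)) • z) z w‖ ^ 2
        ≤ (1 + ‖z‖ ^ 2) ^ (-μ / 2) * ‖w‖ ^ 2) := by
  have hb : ∀ z : E, (0:ℝ) < 1 + ‖z‖ ^ 2 := fun z => by positivity
  -- derivative of the scalar part
  have hc : ∀ z : E, HasFDerivAt (fun z : E => (1 + ‖z‖ ^ 2) ^ (-μ / 4))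
      (((-μ/4) * (1 + ‖z‖ ^ 2) ^ (-μ/4 - 1)) • (2 • (innerSL ℝ z))) z := by
    intro z
    have h1 : HasFDerivAt (fun z : E => 1 + ‖z‖ ^ 2) (2 • (innerSL ℝ z)) z := by
      simpa using ((hasFDerivAt_id z).norm_sq).const_add (1:ℝ)
    have h2 : HasDerivAt (fun t : ℝ => t ^ (-μ/4))
        ((-μ/4) * (1 + ‖z‖ ^ 2) ^ (-μ/4 - 1)) (1 + ‖z‖ ^ 2) :=
      Real.hasDerivAt_rpow_const (Or.inl (hb z).ne')
    exact h2.comp_hasFDerivAt z h1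
  have key : ∀ z : E, HasFDerivAt (fun z : E => ((1 + ‖z‖ ^ 2) ^ (-μ / 4)) • z)
      (((1 + ‖z‖ ^ 2) ^ (-μ / 4)) • ContinuousLinearMap.id ℝ E
        + (((-μ/4) * (1 + ‖z‖ ^ 2) ^ (-μ/4 - 1)) • (2 • (innerSL ℝ z))).smulRight z) z := by
    intro z
    exact (hc z).smul (hasFDerivAt_id z)
  -- pointwise bound
  have bound : ∀ z w : E,
      ‖(((1 + ‖z‖ ^ 2) ^ (-μ / 4)) • ContinuousLinearMap.id ℝ E
        + (((-μ/4) * (1 + ‖z‖ ^ 2) ^ (-μ/4 - 1)) • (2 • (innerSL ℝ z))).smulRight z) w‖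
        ≤ ((1 + ‖z‖ ^ 2) ^ (-μ / 4)) * ‖w‖ := by
    intro z w
    set b := 1 + ‖z‖ ^ 2 with hbdef
    set a := b ^ (-μ / 4) with hadef
    have hbpos : (0:ℝ) < b := hb z
    have hapos : (0:ℝ) < a := Real.rpow_pos_of_pos hbpos _
    set k := (-μ/4) * b ^ (-μ/4 - 1) * 2 with hkdef
    have happ : (((1 + ‖z‖ ^ 2) ^ (-μ / 4)) • ContinuousLinearMap.id ℝ E
        + (((-μ/4) * (1 + ‖z‖ ^ 2) ^ (-μ/4 - 1)) • (2 • (innerSL ℝ z))).smulRight z) w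
        = a • w + (k * inner ℝ z w) • z := by
      simp [hkdef, hadef, hbdef, ContinuousLinearMap.smulRight_apply, smul_smul]
      ring_nf
    rw [happ]
    have hrel : b ^ (-μ/4 - 1) * b = a := by
      rw [hadef, ← Real.rpow_add_one hbpos.ne']
      ring_nf
    have hksq : k * b = -μ/2 * a := by
      rw [hkdef]; nlinarith [hrel]
    -- square both sides
    have hsq : ‖a • w + (k * inner ℝ z w) • z‖ ^ 2 ≤ (a * ‖w‖) ^ 2 := by
      have expand : ‖a • w + (k * inner ℝ z w) • z‖ ^ 2
          = a^2 * ‖w‖^2 + 2 * (a * (k * inner ℝ z w) * inner ℝ w z)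
            + (k * inner ℝ z w)^2 * ‖z‖^2 := by
        rw [norm_add_sq_real, norm_smul, norm_smul, real_inner_smul_left,
          real_inner_smul_right, mul_pow, mul_pow, Real.norm_eq_abs, Real.norm_eq_abs,
          sq_abs, sq_abs]
        ring
      rw [expand]
      have hcomm : (inner ℝ w z : ℝ) = inner ℝ z w := real_inner_comm z w
      have hzb : ‖z‖^2 ≤ b := by rw [hbdef]; linarith
      have hknonpos : k ≤ 0 := by
        rw [hkdef]
        have : (0:ℝ) < b ^ (-μ/4 - 1) := Real.rpow_pos_of_pos hbpos _
        nlinarith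
      have h2a : 0 ≤ 2 * a + k * ‖z‖^2 := by
        nlinarith [mul_nonneg (neg_nonneg.2 hknonpos) (sub_nonneg.2 hzb), hksq, hapos]
      rw [hcomm]
      nlinarith [mul_nonpos_of_nonpos_of_nonneg hknonpos
        (mul_nonneg (sq_nonneg (inner ℝ z w : ℝ)) h2a)]
    have h1 : 0 ≤ a * ‖w‖ := by positivity
    exact le_of_pow_le_pow_left₀ two_ne_zero h1 hsq
  have hfd : ∀ z : E, fderiv ℝ (fun z : E => ((1 + ‖z‖ ^ 2) ^ (-μ / 4)) • z) z
      = (((1 + ‖z‖ ^ 2) ^ (-μ / 4)) • ContinuousLinearMap.id ℝ E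
        + (((-μ/4) * (1 + ‖z‖ ^ 2) ^ (-μ/4 - 1)) • (2 • (innerSL ℝ z))).smulRight z) :=
    fun z => (key z).fderiv
  refine ⟨?_, ?_, ?_⟩
  · apply ContDiff.smul _ contDiff_id
    rw [contDiff_iff_contDiffAt]
    intro z
    exact (contDiffAt_const.add (contDiffAt_id.norm_sq ℝ)).rpow_const_of_ne (hb z).ne'
  · intro z
    rw [hfd z]
    exact ContinuousLinearMap.opNorm_le_bound _ (Real.rpow_nonneg (hb z).le _) (bound z)
  · intro z w
    rw [hfd z]
    have h := pow_le_pow_left₀ (norm_nonneg _) (bound z w) 2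
    refine h.trans_eq ?_
    rw [mul_pow]
    congr 1
    rw [sq, ← Real.rpow_add (hb z)]
    congr 1
    ring
end

section
/- Let R > 0, let β ∈ (0, 1), c₁ > 0 and θ ≥ 0 be real constants, and let f : ℝ → ℝ be nonnegative and nondecreasing on (0, 2R] and satisfy, for all ρ ∈ (0, R], f(ρ) ≤ (c₁ L(ρ)^β / (c₁ L(ρ)^β + 1)) · f(2ρ) + θ / (c₁ L(ρ)^β + 1), where L(ρ) := log₂(2R/ρ). Then for every real p ≥ 1 there exists a constant c > 0, depending only on p, c₁ and β, such that f(r) ≤ c · (log₂(2R/r))^{−p} · f(2R) + θ for all r ∈ (0, R]. -/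
/-- Polynomial growth is beaten by exponential growth: auxiliary lemma. -/
lemma aux_rpow_le_exp (a q : ℝ) (ha : 0 < a) (hq : 0 ≤ q) :
    ∃ C : ℝ, 0 < C ∧ ∀ t : ℝ, 1 ≤ t → t ^ q ≤ C * Real.exp (a * t) := by
  set m : ℕ := ⌈q⌉₊ + 1 with hm
  have hm0 : (0:ℝ) < (m:ℝ) := by positivity
  refine ⟨((m:ℝ)/a)^m, by positivity, ?_⟩
  intro t ht
  have ht0 : (0:ℝ) < t := by linarith
  have h1 : t ^ q ≤ t ^ (m:ℝ) := by
    apply Real.rpow_le_rpow_of_exponent_le ht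
    calc q ≤ (⌈q⌉₊ : ℝ) := Nat.le_ceil q
    _ ≤ (m:ℝ) := by rw [hm]; push_cast; linarith
  have h2 : t ^ (m:ℝ) = t ^ m := Real.rpow_natCast t m
  have hx : (0:ℝ) ≤ a * t / m := by positivity
  have h3 : a * t / m ≤ Real.exp (a * t / m) := by
    have := Real.add_one_le_exp (a * t / m); linarith
  have h4 : (a * t / m) ^ m ≤ Real.exp (a * t) := by
    calc (a * t / m) ^ m ≤ (Real.exp (a * t / m)) ^ m := pow_le_pow_left₀ hx h3 m
    _ = Real.exp (a * t) := by
        rw [← Real.exp_nat_mul]; congr 1; field_simp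
  have h5 : t ^ m = ((m:ℝ)/a)^m * (a * t / m) ^ m := by
    rw [← mul_pow]; congr 1; field_simp
  calc t ^ q ≤ t ^ m := by rw [← h2]; exact h1
  _ = ((m:ℝ)/a)^m * (a * t / m) ^ m := h5
  _ ≤ ((m:ℝ)/a)^m * Real.exp (a * t) := by
      apply mul_le_mul_of_nonneg_left h4 (by positivity)

set_option maxHeartbeats 1000000 in
/-- Logarithmic iteration lemma (from the proof of the Frehse--Seregin-type
Lemma 2.10 / Appendix of the paper). -/
theorem log_iteration_decay
    (R β c₁ θ : ℝ) (hR : 0 < R) (hβ0 : 0 < β) (hβ1 : β < 1)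
    (hc₁ : 0 < c₁) (hθ : 0 ≤ θ) (f : ℝ → ℝ)
    (hf_nonneg : ∀ ρ ∈ Set.Ioc (0 : ℝ) (2 * R), 0 ≤ f ρ)
    (hf_mono : MonotoneOn f (Set.Ioc (0 : ℝ) (2 * R)))
    (hf_iter : ∀ ρ ∈ Set.Ioc (0 : ℝ) R,
      f ρ ≤ (c₁ * (Real.logb 2 (2 * R / ρ)) ^ β / (c₁ * (Real.logb 2 (2 * R / ρ)) ^ β + 1))
              * f (2 * ρ)
            + θ / (c₁ * (Real.logb 2 (2 * R / ρ)) ^ β + 1)) :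
    ∀ p : ℝ, 1 ≤ p → ∃ c : ℝ, 0 < c ∧ ∀ r ∈ Set.Ioc (0 : ℝ) R,
      f r ≤ c * (Real.logb 2 (2 * R / r)) ^ (-p) * f (2 * R) + θ := by
  intro p hp
  have h2R : (0:ℝ) < 2 * R := by linarith
  have hfR : 0 ≤ f (2 * R) := hf_nonneg _ ⟨h2R, le_refl _⟩
  -- log is at least 1 on (0, R]
  have hLone : ∀ ρ : ℝ, 0 < ρ → ρ ≤ R → 1 ≤ Real.logb 2 (2 * R / ρ) := by
    intro ρ hρ hρR
    rw [Real.le_logb_iff_rpow_le one_lt_two (by positivity), Real.rpow_one,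
      le_div_iff₀ hρ]
    nlinarith
  -- denominator positivity
  have hden : ∀ x : ℝ, 0 ≤ x → 0 < c₁ * x ^ β + 1 := by
    intro x hx; positivity
  -- the coefficient is in [0,1]
  have hg0 : ∀ x : ℝ, 0 ≤ x → 0 ≤ c₁ * x ^ β / (c₁ * x ^ β + 1) := by
    intro x hx
    have := hden x hx
    positivity
  have hg1 : ∀ x : ℝ, 0 ≤ x → c₁ * x ^ β / (c₁ * x ^ β + 1) ≤ 1 := by
    intro x hx
    have h := hden x hx
    rw [div_le_one h]; linarith
  -- monotonicity of the coefficient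
  have hgmono : ∀ x y : ℝ, 0 ≤ x → x ≤ y →
      c₁ * x ^ β / (c₁ * x ^ β + 1) ≤ c₁ * y ^ β / (c₁ * y ^ β + 1) := by
    intro x y hx hxy
    have hy : 0 ≤ y := le_trans hx hxy
    have hxb : x ^ β ≤ y ^ β := Real.rpow_le_rpow hx hxy (le_of_lt hβ0)
    have h1 := hden x hx
    have h2 := hden y hy
    rw [div_le_div_iff₀ h1 h2]
    nlinarith
  -- log halving under doubling
  have hLdouble : ∀ ρ : ℝ, 0 < ρ →
      Real.logb 2 (2 * R / (2 * ρ)) = Real.logb 2 (2 * R / ρ) - 1 := by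
    intro ρ hρ
    have h1 : 2 * R / (2 * ρ) = (2 * R / ρ) / 2 := by
      field_simp
    rw [h1, Real.logb_div (by positivity) (by norm_num),
      Real.logb_self_eq_one (by norm_num)]
  -- key iteration
  have key : ∀ n : ℕ, ∀ r : ℝ, 0 < r → 2 ^ n * r ≤ R →
      f r ≤ (c₁ * (Real.logb 2 (2 * R / r)) ^ β /
        (c₁ * (Real.logb 2 (2 * R / r)) ^ β + 1)) ^ (n + 1) * f (2 * R) + θ := by
    intro n
    induction n with
    | zero =>
      intro r hr hrR
      rw [pow_zero, one_mul] at hrR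
      have hL1 := hLone r hr hrR
      have hLnn : (0:ℝ) ≤ Real.logb 2 (2 * R / r) := by linarith
      have hd := hden _ hLnn
      have hd1 : (1:ℝ) ≤ c₁ * (Real.logb 2 (2 * R / r)) ^ β + 1 := by
        have : (0:ℝ) ≤ c₁ * (Real.logb 2 (2 * R / r)) ^ β := by positivity
        linarith
      have hmono2 : f (2 * r) ≤ f (2 * R) :=
        hf_mono ⟨by positivity, by linarith⟩ ⟨h2R, le_refl _⟩ (by linarith)
      have h1 := hf_iter r ⟨hr, hrR⟩
      have hA0 := hg0 _ hLnn
      have hθd : θ / (c₁ * (Real.logb 2 (2 * R / r)) ^ β + 1) ≤ θ :=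
        div_le_self hθ hd1
      calc f r ≤ (c₁ * (Real.logb 2 (2 * R / r)) ^ β /
            (c₁ * (Real.logb 2 (2 * R / r)) ^ β + 1)) * f (2 * r)
            + θ / (c₁ * (Real.logb 2 (2 * R / r)) ^ β + 1) := h1
      _ ≤ (c₁ * (Real.logb 2 (2 * R / r)) ^ β /
            (c₁ * (Real.logb 2 (2 * R / r)) ^ β + 1)) * f (2 * R) + θ := by
          gcongr
      _ = (c₁ * (Real.logb 2 (2 * R / r)) ^ β /
            (c₁ * (Real.logb 2 (2 * R / r)) ^ β + 1)) ^ (0 + 1) * f (2 * R) + θ := by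
          rw [zero_add, pow_one]
    | succ n ih =>
      intro r hr hrR
      have hpow1 : (1:ℝ) ≤ 2 ^ (n + 1) := one_le_pow₀ (by norm_num)
      have hpow2 : (2:ℝ) ≤ 2 ^ (n + 1) :=
        le_self_pow₀ (by norm_num) (Nat.succ_ne_zero n)
      have hrR' : r ≤ R := by nlinarith
      have h2rR : 2 * r ≤ R := by nlinarith
      have h2r : 2 ^ n * (2 * r) ≤ R := by
        have : (2:ℝ) ^ n * (2 * r) = 2 ^ (n + 1) * r := by ring
        linarith [this ▸ hrR]
      have ih2 := ih (2 * r) (by positivity) h2r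
      have hL1 := hLone r hr hrR'
      have hL1' := hLone (2 * r) (by positivity) h2rR
      have hLnn : (0:ℝ) ≤ Real.logb 2 (2 * R / r) := by linarith
      have hLnn' : (0:ℝ) ≤ Real.logb 2 (2 * R / (2 * r)) := by linarith
      have hLle : Real.logb 2 (2 * R / (2 * r)) ≤ Real.logb 2 (2 * R / r) := by
        rw [hLdouble r hr]; linarith
      have hAle : c₁ * (Real.logb 2 (2 * R / (2 * r))) ^ β /
          (c₁ * (Real.logb 2 (2 * R / (2 * r))) ^ β + 1) ≤
          c₁ * (Real.logb 2 (2 * R / r)) ^ β /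
          (c₁ * (Real.logb 2 (2 * R / r)) ^ β + 1) := hgmono _ _ hLnn' hLle
      have hA0' := hg0 _ hLnn'
      have hA0 := hg0 _ hLnn
      have hApow : (c₁ * (Real.logb 2 (2 * R / (2 * r))) ^ β /
          (c₁ * (Real.logb 2 (2 * R / (2 * r))) ^ β + 1)) ^ (n + 1) ≤
          (c₁ * (Real.logb 2 (2 * R / r)) ^ β /
          (c₁ * (Real.logb 2 (2 * R / r)) ^ β + 1)) ^ (n + 1) :=
        pow_le_pow_left₀ hA0' hAle (n + 1)
      have hf2r : f (2 * r) ≤ (c₁ * (Real.logb 2 (2 * R / r)) ^ β /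
          (c₁ * (Real.logb 2 (2 * R / r)) ^ β + 1)) ^ (n + 1) * f (2 * R) + θ := by
        calc f (2 * r) ≤ _ := ih2
        _ ≤ _ := by gcongr
      have hd := hden _ hLnn
      have h1 := hf_iter r ⟨hr, hrR'⟩
      have hsum : c₁ * (Real.logb 2 (2 * R / r)) ^ β /
          (c₁ * (Real.logb 2 (2 * R / r)) ^ β + 1) * θ
          + θ / (c₁ * (Real.logb 2 (2 * R / r)) ^ β + 1) = θ := by
        field_simp
      calc f r ≤ (c₁ * (Real.logb 2 (2 * R / r)) ^ β /
            (c₁ * (Real.logb 2 (2 * R / r)) ^ β + 1)) * f (2 * r)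
            + θ / (c₁ * (Real.logb 2 (2 * R / r)) ^ β + 1) := h1
      _ ≤ (c₁ * (Real.logb 2 (2 * R / r)) ^ β /
            (c₁ * (Real.logb 2 (2 * R / r)) ^ β + 1)) *
            ((c₁ * (Real.logb 2 (2 * R / r)) ^ β /
            (c₁ * (Real.logb 2 (2 * R / r)) ^ β + 1)) ^ (n + 1) * f (2 * R) + θ)
            + θ / (c₁ * (Real.logb 2 (2 * R / r)) ^ β + 1) := by
          gcongr
      _ = (c₁ * (Real.logb 2 (2 * R / r)) ^ β /
            (c₁ * (Real.logb 2 (2 * R / r)) ^ β + 1)) ^ (n + 1 + 1) * f (2 * R)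
            + (c₁ * (Real.logb 2 (2 * R / r)) ^ β /
            (c₁ * (Real.logb 2 (2 * R / r)) ^ β + 1) * θ
            + θ / (c₁ * (Real.logb 2 (2 * R / r)) ^ β + 1)) := by
          ring
      _ = _ := by rw [hsum]
  -- asymptotic constant
  have hγ : (0:ℝ) < 1 - β := by linarith
  have ha : (0:ℝ) < 1 / (2 * (c₁ + 1)) := by positivity
  obtain ⟨C, hC, hCexp⟩ := aux_rpow_le_exp (1 / (2 * (c₁ + 1))) (p / (1 - β)) ha
    (by positivity)
  refine ⟨(2:ℝ) ^ p + C, by positivity, ?_⟩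
  rintro r ⟨hr, hrR⟩
  have hL1 := hLone r hr hrR
  have hLnn : (0:ℝ) ≤ Real.logb 2 (2 * R / r) := by linarith
  set Lr := Real.logb 2 (2 * R / r) with hLr
  have hLppos : (0:ℝ) < Lr ^ p := Real.rpow_pos_of_pos (by linarith) p
  have hLnppos : (0:ℝ) < Lr ^ (-p) := Real.rpow_pos_of_pos (by linarith) (-p)
  -- choose the number of doubling steps
  have hm1 : 1 ≤ ⌊Lr⌋₊ := Nat.le_floor (by exact_mod_cast hL1)
  obtain ⟨k, hk⟩ : ∃ k, ⌊Lr⌋₊ = k + 1 := ⟨⌊Lr⌋₊ - 1, (Nat.succ_pred_eq_of_pos hm1).symm⟩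
  have hmL : ((k:ℝ) + 1) ≤ Lr := by
    have := Nat.floor_le hLnn
    rw [hk] at this; push_cast at this; linarith
  have hLm : Lr < (k:ℝ) + 1 + 1 := by
    have := Nat.lt_floor_add_one Lr
    rw [hk] at this; push_cast at this; linarith
  have hpowk : (2:ℝ) ^ (k + 1) * r ≤ 2 * R := by
    have h1 : (2:ℝ) ^ (((k:ℕ) + 1 : ℕ):ℝ) ≤ (2:ℝ) ^ Lr :=
      Real.rpow_le_rpow_of_exponent_le one_le_two (by push_cast; linarith)
    have h2 : (2:ℝ) ^ Lr = 2 * R / r := Real.rpow_logb (by norm_num) (by norm_num)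
      (by positivity)
    rw [h2, Real.rpow_natCast] at h1
    rw [← le_div_iff₀ hr]
    exact h1
  have hstep : (2:ℝ) ^ k * r ≤ R := by
    have : (2:ℝ) ^ (k + 1) = 2 * 2 ^ k := by ring
    rw [this] at hpowk
    linarith
  have hkey := key k r hr hstep
  rw [← hLr] at hkey
  -- bound the coefficient power
  have hd := hden Lr hLnn
  have hA0 := hg0 Lr hLnn
  have hA1 := hg1 Lr hLnn
  have hAexp : c₁ * Lr ^ β / (c₁ * Lr ^ β + 1) ≤ Real.exp (-(1 / (c₁ * Lr ^ β + 1))) := by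
    have h1 := Real.add_one_le_exp (-(1 / (c₁ * Lr ^ β + 1)))
    have h2 : c₁ * Lr ^ β / (c₁ * Lr ^ β + 1) = 1 - 1 / (c₁ * Lr ^ β + 1) := by
      field_simp
      ring
    rw [h2]; linarith
  have hApowexp : (c₁ * Lr ^ β / (c₁ * Lr ^ β + 1)) ^ (k + 1) ≤
      Real.exp (-(((k:ℝ) + 1) / (c₁ * Lr ^ β + 1))) := by
    calc (c₁ * Lr ^ β / (c₁ * Lr ^ β + 1)) ^ (k + 1)
        ≤ (Real.exp (-(1 / (c₁ * Lr ^ β + 1)))) ^ (k + 1) :=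
          pow_le_pow_left₀ hA0 hAexp (k + 1)
    _ = Real.exp (((k:ℕ) + 1 : ℕ) * (-(1 / (c₁ * Lr ^ β + 1)))) := by
          rw [← Real.exp_nat_mul]
    _ = Real.exp (-(((k:ℝ) + 1) / (c₁ * Lr ^ β + 1))) := by
          push_cast; ring_nf
  have hexp2 : Real.exp (-(((k:ℝ) + 1) / (c₁ * Lr ^ β + 1))) ≤
      Real.exp (-((Lr - 1) / (c₁ * Lr ^ β + 1))) := by
    apply Real.exp_le_exp.mpr
    rw [neg_le_neg_iff]
    gcongr
    linarith
  have hmain : (c₁ * Lr ^ β / (c₁ * Lr ^ β + 1)) ^ (k + 1) ≤ ((2:ℝ) ^ p + C) * Lr ^ (-p) := by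
    by_cases hL2 : Lr ≤ 2
    · have h1 : (c₁ * Lr ^ β / (c₁ * Lr ^ β + 1)) ^ (k + 1) ≤ 1 := pow_le_one₀ hA0 hA1
      have h2 : Lr ^ p ≤ (2:ℝ) ^ p := Real.rpow_le_rpow hLnn hL2 (by linarith)
      have h3 : (1:ℝ) ≤ (2:ℝ) ^ p * Lr ^ (-p) := by
        rw [Real.rpow_neg hLnn]
        calc (1:ℝ) = Lr ^ p * (Lr ^ p)⁻¹ := (mul_inv_cancel₀ hLppos.ne').symm
        _ ≤ (2:ℝ) ^ p * (Lr ^ p)⁻¹ := by gcongr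
      have h4 : (0:ℝ) < C * Lr ^ (-p) := by positivity
      calc (c₁ * Lr ^ β / (c₁ * Lr ^ β + 1)) ^ (k + 1) ≤ 1 := h1
      _ ≤ (2:ℝ) ^ p * Lr ^ (-p) := h3
      _ ≤ ((2:ℝ) ^ p + C) * Lr ^ (-p) :=
          mul_le_mul_of_nonneg_right (le_add_of_nonneg_right hC.le) hLnppos.le
    · push_neg at hL2
      have ht1 : (1:ℝ) ≤ Lr ^ (1 - β) := Real.one_le_rpow hL1 (le_of_lt hγ)
      have hCt := hCexp (Lr ^ (1 - β)) ht1
      have htq : (Lr ^ (1 - β)) ^ (p / (1 - β)) = Lr ^ p := by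
        rw [← Real.rpow_mul hLnn]
        congr 1
        field_simp
      rw [htq] at hCt
      have hexp3 : 1 / (2 * (c₁ + 1)) * Lr ^ (1 - β) ≤ (Lr - 1) / (c₁ * Lr ^ β + 1) := by
        have hb1 : (1:ℝ) ≤ Lr ^ β := Real.one_le_rpow hL1 (le_of_lt hβ0)
        have hdle : c₁ * Lr ^ β + 1 ≤ (c₁ + 1) * Lr ^ β := by
          have hexpand : (c₁ + 1) * Lr ^ β = c₁ * Lr ^ β + Lr ^ β := by ring
          linarith
        have hnum : Lr / 2 ≤ Lr - 1 := by linarith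
        have hsplit : Lr ^ (1 - β) = Lr / Lr ^ β := by
          rw [Real.rpow_sub (by linarith : (0:ℝ) < Lr), Real.rpow_one]
        have h5 : 1 / (2 * (c₁ + 1)) * Lr ^ (1 - β) = (Lr / 2) / ((c₁ + 1) * Lr ^ β) := by
          rw [hsplit]
          field_simp
        rw [h5]
        exact div_le_div₀ (by linarith) hnum hd hdle
      have hexp4 : Real.exp (-((Lr - 1) / (c₁ * Lr ^ β + 1))) ≤
          Real.exp (-(1 / (2 * (c₁ + 1)) * Lr ^ (1 - β))) :=
        Real.exp_le_exp.mpr (by linarith)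
      have hE : (0:ℝ) < Real.exp (1 / (2 * (c₁ + 1)) * Lr ^ (1 - β)) := Real.exp_pos _
      have h6 : Real.exp (-(1 / (2 * (c₁ + 1)) * Lr ^ (1 - β))) ≤ C * Lr ^ (-p) := by
        rw [Real.exp_neg, Real.rpow_neg hLnn, inv_eq_one_div, ← div_eq_mul_inv,
          div_le_div_iff₀ hE hLppos]
        calc 1 * Lr ^ p = Lr ^ p := one_mul _
        _ ≤ C * Real.exp (1 / (2 * (c₁ + 1)) * Lr ^ (1 - β)) := hCt
      have h2p : (0:ℝ) < (2:ℝ) ^ p := Real.rpow_pos_of_pos (by norm_num) p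
      calc (c₁ * Lr ^ β / (c₁ * Lr ^ β + 1)) ^ (k + 1)
          ≤ Real.exp (-(((k:ℝ) + 1) / (c₁ * Lr ^ β + 1))) := hApowexp
      _ ≤ Real.exp (-((Lr - 1) / (c₁ * Lr ^ β + 1))) := hexp2
      _ ≤ Real.exp (-(1 / (2 * (c₁ + 1)) * Lr ^ (1 - β))) := hexp4
      _ ≤ C * Lr ^ (-p) := h6
      _ ≤ ((2:ℝ) ^ p + C) * Lr ^ (-p) :=
          mul_le_mul_of_nonneg_right (by linarith) hLnppos.le
  calc f r ≤ (c₁ * Lr ^ β / (c₁ * Lr ^ β + 1)) ^ (k + 1) * f (2 * R) + θ := hkey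
  _ ≤ ((2:ℝ) ^ p + C) * Lr ^ (-p) * f (2 * R) + θ :=
      add_le_add_left (mul_le_mul_of_nonneg_right hmain hfR) θ
end

section
/- Let c₁ > 0 and β ∈ (0, 1) be real constants and let M ∈ ℕ with M ≥ 1. Then ∏_{k=1}^{M} (c₁(k+1)^β / (c₁(k+1)^β + 1)) ≤ exp(−((M+2)^{1−β} − 2^{1−β}) / ((c₁+1)(1−β))). -/
open Real

/-- Mean value theorem step: for `x ≥ 1` and `0 < p < 1`,
`(x+1)^p - x^p ≤ p * x^(p-1)`. -/
lemma mvt_rpow_step (p : ℝ) (hp0 : 0 < p) (hp1 : p < 1) (x : ℝ) (hx : 1 ≤ x) :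
    (x + 1) ^ p - x ^ p ≤ p * x ^ (p - 1) := by
  have hx0 : 0 < x := lt_of_lt_of_le one_pos hx
  obtain ⟨c, hc, hderiv⟩ := exists_hasDerivAt_eq_slope (fun y => y ^ p)
    (fun y => p * y ^ (p - 1)) (by linarith : x < x + 1)
    (by
      apply ContinuousOn.rpow_const continuousOn_id
      intro y hy
      refine Or.inl ?_
      simp only [Set.mem_Icc] at hy
      intro h
      simp only [id_eq] at h
      linarith [hy.1])
    (fun y hy => by
      simp only [Set.mem_Ioo] at hy
      exact Real.hasDerivAt_rpow_const (Or.inl (by nlinarith [hy.1])))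
  simp only [Set.mem_Ioo] at hc
  have hcx : x ≤ c := le_of_lt hc.1
  have hle : c ^ (p - 1) ≤ x ^ (p - 1) :=
    Real.rpow_le_rpow_of_nonpos hx0 hcx (by linarith)
  have : (x + 1) ^ p - x ^ p = p * c ^ (p - 1) := by
    rw [hderiv]; ring
  rw [this]
  exact mul_le_mul_of_nonneg_left hle (le_of_lt hp0)

/-- Product estimate from the Appendix of the paper: the product
`∏_{k=1}^{M} c₁(k+1)^β/(c₁(k+1)^β+1)` decays like
`exp(-((M+2)^(1-β) - 2^(1-β))/((c₁+1)(1-β)))`. -/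
theorem product_exp_decay
    (c₁ β : ℝ) (hc₁ : 0 < c₁) (hβ0 : 0 < β) (hβ1 : β < 1) (M : ℕ) (hM : 1 ≤ M) :
    ∏ k ∈ Finset.Icc 1 M,
        (c₁ * ((k : ℝ) + 1) ^ β / (c₁ * ((k : ℝ) + 1) ^ β + 1))
      ≤ Real.exp (-((((M : ℝ) + 2) ^ (1 - β) - (2 : ℝ) ^ (1 - β)) /
          ((c₁ + 1) * (1 - β)))) := by
  have hp0 : (0 : ℝ) < 1 - β := by linarith
  set p : ℝ := 1 - β with hpdef
  set t : ℕ → ℝ := fun k => ((((k : ℝ) + 2) ^ p - ((k : ℝ) + 1) ^ p) / ((c₁ + 1) * p))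
    with htdef
  -- pointwise bound on factors
  have hfac : ∀ k ∈ Finset.Icc 1 M,
      c₁ * ((k : ℝ) + 1) ^ β / (c₁ * ((k : ℝ) + 1) ^ β + 1) ≤ Real.exp (-(t k)) := by
    intro k hk
    simp only [Finset.mem_Icc] at hk
    have hk1 : (1 : ℝ) ≤ (k : ℝ) := by exact_mod_cast hk.1
    have hx1 : (1 : ℝ) ≤ (k : ℝ) + 1 := by linarith
    have hb : (0 : ℝ) < ((k : ℝ) + 1) ^ β := Real.rpow_pos_of_pos (by linarith) β
    have hb1 : (1 : ℝ) ≤ ((k : ℝ) + 1) ^ β := Real.one_le_rpow hx1 (le_of_lt hβ0)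
    have ha : (0 : ℝ) < c₁ * ((k : ℝ) + 1) ^ β := mul_pos hc₁ hb
    have ha1 : (0 : ℝ) < c₁ * ((k : ℝ) + 1) ^ β + 1 := by linarith
    -- t k ≤ 1/(a+1)
    have hmvt : (((k : ℝ) + 2) ^ p - ((k : ℝ) + 1) ^ p) ≤ p * ((k : ℝ) + 1) ^ (p - 1) := by
      have := mvt_rpow_step p hp0 (by simp [hpdef]; linarith) ((k : ℝ) + 1) hx1
      rw [show ((k : ℝ) + 2) = ((k : ℝ) + 1) + 1 by ring]
      exact this
    have hpm1 : ((k : ℝ) + 1) ^ (p - 1) = (((k : ℝ) + 1) ^ β)⁻¹ := by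
      rw [show p - 1 = -β by simp [hpdef], Real.rpow_neg (by linarith)]
    have htle : t k ≤ 1 / (c₁ * ((k : ℝ) + 1) ^ β + 1) := by
      rw [htdef]
      have hcp : (0 : ℝ) < (c₁ + 1) * p := mul_pos (by linarith) hp0
      rw [div_le_div_iff₀ hcp ha1]
      calc (((k : ℝ) + 2) ^ p - ((k : ℝ) + 1) ^ p) * (c₁ * ((k : ℝ) + 1) ^ β + 1)
          ≤ p * ((k : ℝ) + 1) ^ (p - 1) * (c₁ * ((k : ℝ) + 1) ^ β + 1) := by
            apply mul_le_mul_of_nonneg_right hmvt (le_of_lt ha1)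
        _ = p * (c₁ + (((k : ℝ) + 1) ^ β)⁻¹) := by
            rw [hpm1]; field_simp
        _ ≤ p * (c₁ + 1) := by
            apply mul_le_mul_of_nonneg_left _ (le_of_lt hp0)
            have : (((k : ℝ) + 1) ^ β)⁻¹ ≤ 1 := by
              rw [inv_le_one_iff₀]; right; exact hb1
            linarith
        _ = 1 * ((c₁ + 1) * p) := by ring
    -- factor = 1 - 1/(a+1) ≤ exp(-(1/(a+1))) ≤ exp(-(t k))
    have hfactor : c₁ * ((k : ℝ) + 1) ^ β / (c₁ * ((k : ℝ) + 1) ^ β + 1)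
        = 1 - 1 / (c₁ * ((k : ℝ) + 1) ^ β + 1) := by
      field_simp
      ring
    rw [hfactor]
    calc 1 - 1 / (c₁ * ((k : ℝ) + 1) ^ β + 1)
        ≤ Real.exp (-(1 / (c₁ * ((k : ℝ) + 1) ^ β + 1))) := by
          have := Real.add_one_le_exp (-(1 / (c₁ * ((k : ℝ) + 1) ^ β + 1)))
          linarith
      _ ≤ Real.exp (-(t k)) := by
          apply Real.exp_le_exp.mpr
          linarith
  -- product bound
  have hprod : ∏ k ∈ Finset.Icc 1 M,
      (c₁ * ((k : ℝ) + 1) ^ β / (c₁ * ((k : ℝ) + 1) ^ β + 1))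
      ≤ ∏ k ∈ Finset.Icc 1 M, Real.exp (-(t k)) := by
    apply Finset.prod_le_prod
    · intro k _
      have hb : (0 : ℝ) < ((k : ℝ) + 1) ^ β :=
        Real.rpow_pos_of_pos (by positivity) β
      positivity
    · exact hfac
  rw [← Real.exp_sum] at hprod
  -- telescoping sum
  have hsum : ∑ k ∈ Finset.Icc 1 M, t k
      = (((M : ℝ) + 2) ^ p - (2 : ℝ) ^ p) / ((c₁ + 1) * p) := by
    have h1 : ∀ N : ℕ, ∑ k ∈ Finset.Icc 1 N, ((((k : ℝ) + 2) ^ p - ((k : ℝ) + 1) ^ p))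
        = ((N : ℝ) + 2) ^ p - (2 : ℝ) ^ p := by
      intro N
      induction N with
      | zero => norm_num
      | succ n ih =>
        rw [Finset.sum_Icc_succ_top (by omega : 1 ≤ n + 1), ih]
        push_cast
        ring
    rw [htdef]
    simp only
    rw [← Finset.sum_div, h1 M]
  have : ∑ k ∈ Finset.Icc 1 M, -(t k)
      ≤ -((((M : ℝ) + 2) ^ (1 - β) - (2 : ℝ) ^ (1 - β)) / ((c₁ + 1) * (1 - β))) := by
    rw [Finset.sum_neg_distrib, hsum]
  calc ∏ k ∈ Finset.Icc 1 M,
        (c₁ * ((k : ℝ) + 1) ^ β / (c₁ * ((k : ℝ) + 1) ^ β + 1))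
      ≤ Real.exp (∑ k ∈ Finset.Icc 1 M, -(t k)) := hprod
    _ ≤ Real.exp (-((((M : ℝ) + 2) ^ (1 - β) - (2 : ℝ) ^ (1 - β)) /
          ((c₁ + 1) * (1 - β)))) := Real.exp_le_exp.mpr this
end
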